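/- arXiv:2411.02288 — 6 statements merged into one kernel-verified Lean document; each statement's English description precedes it below -/
import Mathlib

section
/- For every integer k ≥ 4, the domination polynomial of the tree T_k is not log-concave. Specifically, d_{3k+2}(T_k)^2 < d_{3k+1}(T_k) · d_{3k+3}(T_k), where d_i denotes the number of dominating sets of cardinality i (note γ(T_k) = 3k+1). -/
open scoped Classical

variable {V : Type*} [Fintype V] [DecidableEq V]

/-- `S` is a dominating set of `G`: every vertex is in `S` or adjacent to a vertex of `S`. -/
def IsDomSet (G : SimpleGraph V) (S : Finset V) : Prop :=
  ∀ v : V, v ∈ S ∨ ∃ u ∈ S, G.Adj u v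

/-- `S` is a minimal dominating set: it is dominating and no proper subset is dominating. -/
def MinimalDomSet (G : SimpleGraph V) (S : Finset V) : Prop :=
  IsDomSet G S ∧ ∀ T : Finset V, T ⊂ S → ¬ IsDomSet G T

/-- `d_i(G)`: the number of dominating sets of `G` of cardinality `i`. -/
noncomputable def domCount (G : SimpleGraph V) (i : ℕ) : ℕ :=
  (Finset.univ.filter fun S : Finset V => IsDomSet G S ∧ S.card = i).card

/-- `a(S)`: the set of critical vertices of a dominating set `S`. -/
noncomputable def aSet (G : SimpleGraph V) (S : Finset V) : Finset V :=
  S.filter fun v => ¬ IsDomSet G (S.erase v)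

/-- `a(G,i)`: the sum of `|a(S)|` over all dominating sets `S` of cardinality `i`. -/
noncomputable def aTotal (G : SimpleGraph V) (i : ℕ) : ℕ :=
  ∑ S ∈ Finset.univ.filter (fun S : Finset V => IsDomSet G S ∧ S.card = i), (aSet G S).card

/-- `γ(G)`: the minimum cardinality of a dominating set. -/
noncomputable def gamma (G : SimpleGraph V) : ℕ :=
  sInf {k | ∃ S : Finset V, IsDomSet G S ∧ S.card = k}

/-- `Γ(G)`: the maximum cardinality of a minimal dominating set. -/
noncomputable def bigGamma (G : SimpleGraph V) : ℕ :=
  sSup {k | ∃ S : Finset V, MinimalDomSet G S ∧ S.card = k}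

/-- The closed neighbourhood `N[v]` as a finset. -/
noncomputable def closedNbhd (G : SimpleGraph V) (v : V) : Finset V :=
  Finset.univ.filter fun u => u = v ∨ G.Adj v u

/-- `N_1(S)`: vertices outside `S` with exactly one closed neighbour in `S`. -/
noncomputable def N1Set (G : SimpleGraph V) (S : Finset V) : Finset V :=
  Finset.univ.filter fun v => v ∉ S ∧ (closedNbhd G v ∩ S).card = 1

/-- `N_2(S)`: vertices outside `S` with at least two closed neighbours in `S`. -/
noncomputable def N2Set (G : SimpleGraph V) (S : Finset V) : Finset V :=
  Finset.univ.filter fun v => v ∉ S ∧ 2 ≤ (closedNbhd G v ∩ S).card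

/-- `a_1(S)`: critical vertices whose closed neighbourhood meets `N_1(S)`. -/
noncomputable def a1Set (G : SimpleGraph V) (S : Finset V) : Finset V :=
  (aSet G S).filter fun v => (closedNbhd G v ∩ N1Set G S).Nonempty

/-- `a_2(S)`: critical vertices whose closed neighbourhood misses `N_1(S)`. -/
noncomputable def a2Set (G : SimpleGraph V) (S : Finset V) : Finset V :=
  (aSet G S).filter fun v => closedNbhd G v ∩ N1Set G S = ∅

/-- In the tree `G` rooted at `r`, `x` is a descendant of `y`:
`y` lies on the unique path from `x` to the root `r`. -/
def Descendant (G : SimpleGraph V) (r x y : V) : Prop :=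
  G.dist x r = G.dist x y + G.dist y r

/-- `x` is a child of `y` in `G` rooted at `r`. -/
def IsChild (G : SimpleGraph V) (r x y : V) : Prop :=
  Descendant G r x y ∧ G.dist y x = 1

/-- `p` is the parent of `x` in `G` rooted at `r`. -/
def IsParent (G : SimpleGraph V) (r p x : V) : Prop :=
  IsChild G r x p

/-- `x` is a grandchild of `y` in `G` rooted at `r`. -/
def IsGrandchild (G : SimpleGraph V) (r x y : V) : Prop :=
  Descendant G r x y ∧ G.dist y x = 2

/-- The vertex type of the tree `T_k`: `Sum.inl i` is `v_i` (`0 ≤ i ≤ 3`), and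
`Sum.inr (i, j, l)` is `x_{(i+1)(j+1)}`, `y_{(i+1)(j+1)}`, `z_{(i+1)(j+1)}` for `l = 0, 1, 2`. -/
abbrev Vk (k : ℕ) := Fin 4 ⊕ (Fin 3 × Fin k × Fin 3)

/-- The base edge relation of `T_k`: `v_0` is adjacent to `v_1, v_2, v_3`;
`v_{i+1}` is adjacent to each `x_{(i+1)j}`; and `x_{ij} ~ y_{ij}`, `y_{ij} ~ z_{ij}`. -/
def tkRel (k : ℕ) : Vk k → Vk k → Prop
  | Sum.inl a, Sum.inl b => a = 0 ∧ b ≠ 0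
  | Sum.inl a, Sum.inr (i, _, l) => (a : ℕ) = (i : ℕ) + 1 ∧ l = 0
  | Sum.inr (i, j, l), Sum.inr (i', j', l') => i = i' ∧ j = j' ∧ (l' : ℕ) = (l : ℕ) + 1
  | Sum.inr _, Sum.inl _ => False

/-- The tree `T_k` on `9k + 4` vertices from Figure 1. -/
def Tk (k : ℕ) : SimpleGraph (Vk k) := SimpleGraph.fromRel (tkRel k)

namespace TkAux
variable {k : ℕ}

def vIdx (i : Fin 3) : Fin 4 := i.succ

lemma vIdx_ne_zero (i : Fin 3) : vIdx i ≠ 0 := by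
  fin_cases i <;> decide

lemma vIdx_inj : Function.Injective vIdx := by
  intro a b h; fin_cases a <;> fin_cases b <;> first | rfl | (exfalso; exact absurd h (by decide))

-- abbreviations for vertices
def xV (i : Fin 3) (j : Fin k) : Vk k := Sum.inr (i, j, 0)
def yV (i : Fin 3) (j : Fin k) : Vk k := Sum.inr (i, j, 1)
def zV (i : Fin 3) (j : Fin k) : Vk k := Sum.inr (i, j, 2)

lemma adj_iff {u w : Vk k} : (Tk k).Adj u w ↔ u ≠ w ∧ (tkRel k u w ∨ tkRel k w u) := by
  simp [Tk, SimpleGraph.fromRel_adj]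

-- neighbor classification
lemma adj_z {u : Vk k} {i : Fin 3} {j : Fin k} :
    (Tk k).Adj u (zV i j) ↔ u = yV i j := by
  constructor
  · rw [adj_iff]
    rintro ⟨hne, h | h⟩
    · rcases u with a | ⟨i', j', l'⟩
      · simp only [tkRel, zV] at h
        exact absurd h.2 (by decide)
      · obtain ⟨rfl, rfl, hl⟩ := h
        have : l' = 1 := by omega
        subst this; rfl
    · rcases u with a | ⟨i', j', l'⟩
      · exact absurd h (by simp [tkRel, zV])
      · obtain ⟨rfl, rfl, hl⟩ := h
        simp [zV] at hl; omega
  · rintro rfl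
    rw [adj_iff]
    refine ⟨by simp [yV, zV], Or.inl ?_⟩
    simp [tkRel, yV, zV]

end TkAux

namespace TkAux
variable {k : ℕ}

lemma adj_y {u : Vk k} {i : Fin 3} {j : Fin k} :
    (Tk k).Adj u (yV i j) ↔ u = xV i j ∨ u = zV i j := by
  constructor
  · rw [adj_iff]
    rintro ⟨hne, h | h⟩
    · rcases u with a | ⟨i', j', l'⟩
      · simp only [tkRel, yV] at h
        exact absurd h.2 (by decide)
      · obtain ⟨rfl, rfl, hl⟩ := h
        have : l' = 0 := by omega
        subst this; exact Or.inl rfl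
    · rcases u with a | ⟨i', j', l'⟩
      · exact absurd h (by simp [tkRel, yV])
      · obtain ⟨rfl, rfl, hl⟩ := h
        have hl' : (l' : ℕ) = 2 := by omega
        have : l' = 2 := by omega
        subst this; exact Or.inr rfl
  · rintro (rfl | rfl) <;> rw [adj_iff]
    · exact ⟨by simp [yV, xV], Or.inl (by simp [tkRel, xV, yV])⟩
    · exact ⟨by simp [yV, zV], Or.inr (by simp [tkRel, yV, zV])⟩

lemma val_vIdx (i : Fin 3) : ((vIdx i : Fin 4) : ℕ) = (i : ℕ) + 1 := by
  simp [vIdx]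

lemma adj_x {u : Vk k} {i : Fin 3} {j : Fin k} :
    (Tk k).Adj u (xV i j) ↔ u = Sum.inl (vIdx i) ∨ u = yV i j := by
  constructor
  · rw [adj_iff]
    rintro ⟨hne, h | h⟩
    · rcases u with a | ⟨i', j', l'⟩
      · obtain ⟨ha, -⟩ := h
        left
        congr 1
        apply Fin.ext
        rw [val_vIdx]; exact ha
      · obtain ⟨rfl, rfl, hl⟩ := h
        simp [xV] at hl
    · rcases u with a | ⟨i', j', l'⟩
      · exact absurd h (by simp [tkRel, xV])
      · obtain ⟨rfl, rfl, hl⟩ := h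
        have : l' = 1 := by omega
        subst this; exact Or.inr rfl
  · rintro (rfl | rfl) <;> rw [adj_iff]
    · refine ⟨by simp [xV], Or.inl ?_⟩
      simp [tkRel, xV, val_vIdx]
    · exact ⟨by simp [yV, xV], Or.inr (by simp [tkRel, xV, yV])⟩

lemma fin4_cases (a : Fin 4) : a = 0 ∨ ∃ i : Fin 3, a = vIdx i := by
  fin_cases a
  · exact Or.inl rfl
  · exact Or.inr ⟨0, rfl⟩
  · exact Or.inr ⟨1, rfl⟩
  · exact Or.inr ⟨2, rfl⟩

lemma adj_v0 {u : Vk k} :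
    (Tk k).Adj u (Sum.inl 0) ↔ ∃ i : Fin 3, u = Sum.inl (vIdx i) := by
  constructor
  · rw [adj_iff]
    rintro ⟨hne, h | h⟩
    · rcases u with a | w
      · exact absurd rfl h.2
      · exact absurd h (by simp [tkRel])
    · rcases u with a | w
      · simp only [tkRel] at h
        rcases fin4_cases a with rfl | ⟨i, rfl⟩
        · exact absurd rfl h.2
        · exact ⟨i, rfl⟩
      · exact absurd h (by simp [tkRel])
  · rintro ⟨i, rfl⟩
    rw [adj_iff]
    exact ⟨by simp [vIdx_ne_zero i], Or.inr (by simp [tkRel, vIdx_ne_zero i])⟩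

lemma adj_vS {u : Vk k} {i : Fin 3} :
    (Tk k).Adj u (Sum.inl (vIdx i)) ↔ u = Sum.inl 0 ∨ ∃ j : Fin k, u = xV i j := by
  constructor
  · rw [adj_iff]
    rintro ⟨hne, h | h⟩
    · rcases u with a | w
      · simp only [tkRel] at h
        exact Or.inl (by rw [h.1])
      · exact absurd h (by simp [tkRel])
    · rcases u with a | ⟨i', j', l'⟩
      · exact absurd h (by simp [tkRel, vIdx_ne_zero i])
      · obtain ⟨hv, hl⟩ := h
        rw [val_vIdx] at hv
        have : i' = i := by apply Fin.ext; omega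
        subst this; subst hl
        exact Or.inr ⟨j', rfl⟩
  · rintro (rfl | ⟨j, rfl⟩) <;> rw [adj_iff]
    · exact ⟨by simp [(vIdx_ne_zero i).symm], Or.inl (by simp [tkRel, vIdx_ne_zero i])⟩
    · refine ⟨by simp [xV], Or.inr ?_⟩
      simp [tkRel, xV, val_vIdx]

end TkAux

namespace TkAux
variable {k : ℕ}
open Finset

lemma fin3_cases (l : Fin 3) : l = 0 ∨ l = 1 ∨ l = 2 := by revert l; decide

lemma domCriterion {S : Finset (Vk k)} :
    IsDomSet (Tk k) S ↔
      (∀ (i : Fin 3) (j : Fin k), yV i j ∈ S ∨ zV i j ∈ S) ∧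
      (∀ (i : Fin 3) (j : Fin k), xV i j ∈ S ∨ yV i j ∈ S ∨ Sum.inl (vIdx i) ∈ S) ∧
      (∀ i : Fin 3, Sum.inl (vIdx i) ∈ S ∨ Sum.inl (0 : Fin 4) ∈ S ∨ ∃ j, xV i j ∈ S) ∧
      (∃ a : Fin 4, Sum.inl a ∈ S) := by
  constructor
  · intro h
    refine ⟨fun i j => ?_, fun i j => ?_, fun i => ?_, ?_⟩
    · rcases h (zV i j) with hz | ⟨u, hu, hadj⟩
      · exact Or.inr hz
      · rw [adj_z] at hadj; subst hadj; exact Or.inl hu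
    · rcases h (xV i j) with hx | ⟨u, hu, hadj⟩
      · exact Or.inl hx
      · rw [adj_x] at hadj
        rcases hadj with rfl | rfl
        · exact Or.inr (Or.inr hu)
        · exact Or.inr (Or.inl hu)
    · rcases h (Sum.inl (vIdx i)) with hv | ⟨u, hu, hadj⟩
      · exact Or.inl hv
      · rw [adj_vS] at hadj
        rcases hadj with rfl | ⟨j, rfl⟩
        · exact Or.inr (Or.inl hu)
        · exact Or.inr (Or.inr ⟨j, hu⟩)
    · rcases h (Sum.inl (0 : Fin 4)) with hv | ⟨u, hu, hadj⟩
      · exact ⟨0, hv⟩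
      · rw [adj_v0] at hadj
        obtain ⟨i, rfl⟩ := hadj
        exact ⟨vIdx i, hu⟩
  · rintro ⟨h1, h2, h3, h4⟩ v
    rcases v with a | ⟨i, j, l⟩
    · rcases fin4_cases a with rfl | ⟨i, rfl⟩
      · obtain ⟨a', ha'⟩ := h4
        rcases fin4_cases a' with rfl | ⟨i, rfl⟩
        · exact Or.inl ha'
        · exact Or.inr ⟨Sum.inl (vIdx i), ha', adj_v0.2 ⟨i, rfl⟩⟩
      · rcases h3 i with hv | hv | ⟨j, hx⟩
        · exact Or.inl hv
        · exact Or.inr ⟨Sum.inl 0, hv, adj_vS.2 (Or.inl rfl)⟩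
        · exact Or.inr ⟨xV i j, hx, adj_vS.2 (Or.inr ⟨j, rfl⟩)⟩
    · rcases fin3_cases l with rfl | rfl | rfl
      · rcases h2 i j with hx | hy | hv
        · exact Or.inl hx
        · exact Or.inr ⟨yV i j, hy, adj_x.2 (Or.inr rfl)⟩
        · exact Or.inr ⟨Sum.inl (vIdx i), hv, adj_x.2 (Or.inl rfl)⟩
      · rcases h1 i j with hy | hz
        · exact Or.inl hy
        · exact Or.inr ⟨zV i j, hz, adj_y.2 (Or.inr rfl)⟩
      · rcases h1 i j with hy | hz
        · exact Or.inr ⟨yV i j, hy, adj_z.2 rfl⟩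
        · exact Or.inl hz

end TkAux

namespace TkAux
variable {k : ℕ}
open Finset

abbrev PairT (k : ℕ) := Finset (Fin 4) × (Fin 3 × Fin k → Finset (Fin 3))

def Cond (P : PairT k) : Prop :=
  (∀ p : Fin 3 × Fin k, (1 : Fin 3) ∈ P.2 p ∨ (2 : Fin 3) ∈ P.2 p) ∧
  (∀ p : Fin 3 × Fin k, (0 : Fin 3) ∈ P.2 p ∨ (1 : Fin 3) ∈ P.2 p ∨ vIdx p.1 ∈ P.1) ∧
  (∀ i : Fin 3, vIdx i ∈ P.1 ∨ (0 : Fin 4) ∈ P.1 ∨ ∃ j, (0 : Fin 3) ∈ P.2 (i, j)) ∧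
  P.1.Nonempty

def weight (P : PairT k) : ℕ := P.1.card + ∑ p : Fin 3 × Fin k, (P.2 p).card

def decompA (S : Finset (Vk k)) : Finset (Fin 4) :=
  univ.filter fun a => Sum.inl a ∈ S

def decompF (S : Finset (Vk k)) : Fin 3 × Fin k → Finset (Fin 3) :=
  fun p => univ.filter fun l => Sum.inr (p.1, p.2, l) ∈ S

def decomp (S : Finset (Vk k)) : PairT k := (decompA S, decompF S)

noncomputable def mkS (P : PairT k) : Finset (Vk k) :=
  univ.filter fun a => Sum.elim (· ∈ P.1) (fun q => q.2.2 ∈ P.2 (q.1, q.2.1)) a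

@[simp] lemma mem_mkS_inl {P : PairT k} {a : Fin 4} : Sum.inl a ∈ mkS P ↔ a ∈ P.1 := by
  simp [mkS]

@[simp] lemma mem_mkS_inr {P : PairT k} {i : Fin 3} {j : Fin k} {l : Fin 3} :
    (Sum.inr (i, j, l) : Vk k) ∈ mkS P ↔ l ∈ P.2 (i, j) := by
  simp [mkS]

lemma mkS_decomp (S : Finset (Vk k)) : mkS (decomp S) = S := by
  ext a
  rcases a with a | ⟨i, j, l⟩
  · simp [decomp, decompA]
  · simp [decomp, decompF]

lemma decomp_mkS (P : PairT k) : decomp (mkS P) = P := by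
  refine Prod.ext ?_ (funext fun p => ?_)
  · ext a; simp [decomp, decompA]
  · ext l; simp [decomp, decompF]

lemma card_eq_weight (S : Finset (Vk k)) : S.card = weight (decomp S) := by
  classical
  have h0 : S.card = ∑ a : Vk k, if a ∈ S then 1 else 0 := by
    conv_lhs => rw [← Finset.filter_univ_mem S]
    rw [Finset.card_filter]
  have hl : (∑ w : Fin 3 × Fin k × Fin 3, if (Sum.inr w : Vk k) ∈ S then 1 else 0)
      = ∑ i : Fin 3, ∑ j : Fin k, ∑ l : Fin 3,
          if (Sum.inr (i, j, l) : Vk k) ∈ S then 1 else 0 := by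
    rw [Fintype.sum_prod_type]
    exact Finset.sum_congr rfl fun i _ => by rw [Fintype.sum_prod_type]
  have hr : (∑ p : Fin 3 × Fin k, (decompF S p).card)
      = ∑ i : Fin 3, ∑ j : Fin k, ∑ l : Fin 3,
          if (Sum.inr (i, j, l) : Vk k) ∈ S then 1 else 0 := by
    rw [Fintype.sum_prod_type]
    refine Finset.sum_congr rfl fun i _ => Finset.sum_congr rfl fun j _ => ?_
    rw [decompF, Finset.card_filter]
  have ha : (decompA S).card = ∑ a : Fin 4, if Sum.inl a ∈ S then 1 else 0 := by
    rw [decompA, Finset.card_filter]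
  rw [h0, Fintype.sum_sum_type, weight]
  rw [decomp] at *
  rw [hl, ha, hr]

lemma cond_decomp_iff {S : Finset (Vk k)} : Cond (decomp S) ↔ IsDomSet (Tk k) S := by
  rw [domCriterion]
  constructor
  · rintro ⟨c1, c2, c3, c4⟩
    refine ⟨fun i j => ?_, fun i j => ?_, fun i => ?_, ?_⟩
    · simpa [decomp, decompF, yV, zV] using c1 (i, j)
    · simpa [decomp, decompF, decompA, xV, yV] using c2 (i, j)
    · simpa [decomp, decompA, decompF, xV] using c3 i
    · obtain ⟨a, ha⟩ := c4
      exact ⟨a, by simpa [decomp, decompA] using ha⟩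
  · rintro ⟨c1, c2, c3, c4⟩
    refine ⟨fun p => ?_, fun p => ?_, fun i => ?_, ?_⟩
    · simpa [decomp, decompF, yV, zV] using c1 p.1 p.2
    · simpa [decomp, decompF, decompA, xV, yV] using c2 p.1 p.2
    · simpa [decomp, decompA, decompF, xV] using c3 i
    · obtain ⟨a, ha⟩ := c4
      exact ⟨a, by simpa [decomp, decompA] using ha⟩

lemma domCount_eq (m : ℕ) :
    domCount (Tk k) m =
      (univ.filter fun P : PairT k => Cond P ∧ weight P = m).card := by
  classical
  rw [domCount]
  apply Finset.card_bij' (fun S _ => decomp S) (fun P _ => mkS P)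
  · intro S hS
    simp only [mem_filter, mem_univ, true_and] at hS ⊢
    exact ⟨cond_decomp_iff.2 hS.1, (card_eq_weight S).symm.trans hS.2⟩
  · intro P hP
    simp only [mem_filter, mem_univ, true_and] at hP ⊢
    constructor
    · rw [← cond_decomp_iff, decomp_mkS]; exact hP.1
    · rw [card_eq_weight, decomp_mkS]; exact hP.2
  · intro S _; exact mkS_decomp S
  · intro P _; exact decomp_mkS P

end TkAux

namespace TkAux
open Finset

section sums
variable {ι : Type*} [Fintype ι] [DecidableEq ι] (h : ι → ℕ)

lemma sum_ge_one (h1 : ∀ i, 1 ≤ h i) (q : ι) :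
    h q + (Fintype.card ι - 1) ≤ ∑ i, h i := by
  classical
  rw [← Finset.sum_erase_add Finset.univ h (Finset.mem_univ q)]
  have h2 : (Finset.univ.erase q).card ≤ ∑ x ∈ Finset.univ.erase q, h x := by
    simpa using Finset.card_nsmul_le_sum (Finset.univ.erase q) h 1 (fun x _ => h1 x)
  have h3 : (Finset.univ.erase q).card = Fintype.card ι - 1 := by
    rw [Finset.card_erase_of_mem (Finset.mem_univ q), Finset.card_univ]
  have h4 : 1 ≤ Fintype.card ι := Fintype.card_pos_iff.2 ⟨q⟩
  omega

lemma sum_ge_two (h1 : ∀ i, 1 ≤ h i) {q q' : ι} (hne : q' ≠ q) :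
    h q + h q' + (Fintype.card ι - 2) ≤ ∑ i, h i := by
  classical
  rw [← Finset.sum_erase_add Finset.univ h (Finset.mem_univ q)]
  rw [← Finset.sum_erase_add (Finset.univ.erase q) h
      (Finset.mem_erase.2 ⟨hne, Finset.mem_univ q'⟩)]
  have h2 : ((Finset.univ.erase q).erase q').card ≤ ∑ x ∈ (Finset.univ.erase q).erase q', h x := by
    simpa using Finset.card_nsmul_le_sum ((Finset.univ.erase q).erase q') h 1 (fun x _ => h1 x)
  have h3 : ((Finset.univ.erase q).erase q').card = Fintype.card ι - 1 - 1 := by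
    rw [Finset.card_erase_of_mem (Finset.mem_erase.2 ⟨hne, Finset.mem_univ q'⟩),
      Finset.card_erase_of_mem (Finset.mem_univ q), Finset.card_univ]
  have h4 : 2 ≤ Fintype.card ι := Fintype.one_lt_card_iff.2 ⟨q, q', Ne.symm hne⟩
  omega

end sums

variable {k : ℕ}

def bitl (b : Bool) : Fin 3 := if b then 2 else 1

lemma bitl_ne_zero (b : Bool) : bitl b ≠ 0 := by cases b <;> decide

def dec1 (i : Fin 3) (g : Fin k → Bool) : PairT k :=
  ({0, vIdx i}, fun p => if p.1 = i then {bitl (g p.2)} else {1})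

def dec2 (q : Fin 3 × Fin k) (c : Bool) : PairT k :=
  ({0}, fun p => if p = q then {0, bitl c} else {1})

def dec3 (q : Fin 3 × Fin k) : PairT k :=
  ({0}, fun p => if p = q then ({1, 2} : Finset (Fin 3)) else {1})

lemma card_prod_fin : Fintype.card (Fin 3 × Fin k) = 3 * k := by simp

lemma eq_singleton_of_mem {α : Type*} {s : Finset α} {a : α} (h1 : s.card = 1) (ha : a ∈ s) :
    s = {a} := by
  obtain ⟨b, rfl⟩ := Finset.card_eq_one.1 h1
  rw [Finset.mem_singleton] at ha; rw [ha]

lemma fin3_shifts : ∀ i : Fin 3, i + 1 ≠ i ∧ i + 2 ≠ i ∧ i + 1 ≠ i + 2 := by decide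

lemma triple_card : ∀ i : Fin 3,
    ({vIdx i, vIdx (i + 1), vIdx (i + 2)} : Finset (Fin 4)).card = 3 := by decide

lemma pair_card : ∀ i : Fin 3, ({0, vIdx i} : Finset (Fin 4)).card = 2 := by decide

lemma structure2 {P : PairT k} (hk : 1 ≤ k) (hc : Cond P) (hw : weight P = 3 * k + 2) :
    (∃ (i : Fin 3) (g : Fin k → Bool), P = dec1 i g) ∨
    (∃ (q : Fin 3 × Fin k) (c : Bool), P = dec2 q c) ∨
    (∃ q : Fin 3 × Fin k, P = dec3 q) := by
  classical
  obtain ⟨A, f⟩ := P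
  obtain ⟨c1, c2, c3, c4⟩ := hc
  simp only [weight] at hw
  replace c1 : ∀ p : Fin 3 × Fin k, (1 : Fin 3) ∈ f p ∨ (2 : Fin 3) ∈ f p := c1
  replace c2 : ∀ p : Fin 3 × Fin k, (0 : Fin 3) ∈ f p ∨ (1 : Fin 3) ∈ f p ∨ vIdx p.1 ∈ A := c2
  replace c3 : ∀ i : Fin 3, vIdx i ∈ A ∨ (0 : Fin 4) ∈ A ∨ ∃ j, (0 : Fin 3) ∈ f (i, j) := c3
  replace c4 : A.Nonempty := c4
  have hf1 : ∀ p, 1 ≤ (f p).card := by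
    intro p
    rcases c1 p with h | h <;> exact Finset.card_pos.2 ⟨_, h⟩
  have hA1 : 1 ≤ A.card := Finset.card_pos.2 c4
  have htot : 3 * k ≤ ∑ p : Fin 3 × Fin k, (f p).card := by
    have := Finset.card_nsmul_le_sum Finset.univ (fun p => (f p).card) 1 (fun x _ => hf1 x)
    simpa [Finset.card_univ, card_prod_fin] using this
  have hA2 : A.card ≤ 2 := by omega
  have H2 : ∀ q q' : Fin 3 × Fin k, q' ≠ q → 2 ≤ (f q).card → 2 ≤ (f q').card → False := by
    intro q q' hne h2 h2'
    have hst : (f q).card + (f q').card + (Fintype.card (Fin 3 × Fin k) - 2)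
        ≤ ∑ p : Fin 3 × Fin k, (f p).card := sum_ge_two (fun p => (f p).card) hf1 hne
    rw [card_prod_fin] at hst
    omega
  have Hone : ∀ q : Fin 3 × Fin k,
      (f q).card + (3 * k - 1) ≤ ∑ p : Fin 3 × Fin k, (f p).card := by
    intro q
    have hso : (f q).card + (Fintype.card (Fin 3 × Fin k) - 1)
        ≤ ∑ p : Fin 3 × Fin k, (f p).card := sum_ge_one (fun p => (f p).card) hf1 q
    rwa [card_prod_fin] at hso
  have Hzero : ∀ q : Fin 3 × Fin k, (0 : Fin 3) ∈ f q → 2 ≤ (f q).card := by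
    intro q h0
    rcases c1 q with h | h
    · exact Finset.one_lt_card.2 ⟨0, h0, 1, h, by decide⟩
    · exact Finset.one_lt_card.2 ⟨0, h0, 2, h, by decide⟩
  by_cases hv : ∃ i : Fin 3, vIdx i ∈ A
  · -- case α : some v_{i+1} in the set
    obtain ⟨i, hvi⟩ := hv
    obtain ⟨hs1, hs2, hs12⟩ := fin3_shifts i
    have h0A : (0 : Fin 4) ∈ A := by
      by_contra h0
      have hbr : ∀ m : Fin 3, (vIdx m ∈ A ∨ ∃ j, (0 : Fin 3) ∈ f (m, j)) := by
        intro m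
        rcases c3 m with h | h | h
        · exact Or.inl h
        · exact absurd h h0
        · exact Or.inr h
      have hAcard : ∀ m : Fin 3, m ≠ i → vIdx m ∈ A → A.card = 2 ∧
          (∀ p : Fin 3 × Fin k, (f p).card = 1) := by
        intro m hm hmA
        have h2le : 2 ≤ A.card :=
          Finset.one_lt_card.2 ⟨vIdx i, hvi, vIdx m, hmA, fun h => hm (vIdx_inj h).symm⟩
        refine ⟨le_antisymm hA2 h2le, fun p => ?_⟩
        have := Hone p
        have h1 := hf1 p
        omega
      rcases hbr (i + 1) with hA1' | ⟨j1, hj1⟩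
      · rcases hbr (i + 2) with hA2' | ⟨j2, hj2⟩
        · -- three vIdx in A: card ≥ 3
          have hsub : ({vIdx i, vIdx (i + 1), vIdx (i + 2)} : Finset (Fin 4)) ⊆ A := by
            intro a ha
            simp only [Finset.mem_insert, Finset.mem_singleton] at ha
            rcases ha with rfl | rfl | rfl
            · exact hvi
            · exact hA1'
            · exact hA2'
          have := Finset.card_le_card hsub
          rw [triple_card i] at this
          omega
        · obtain ⟨-, hall⟩ := hAcard (i + 1) hs1 hA1'
          have := Hzero (i + 2, j2) hj2
          rw [hall (i + 2, j2)] at this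
          omega
      · rcases hbr (i + 2) with hA2' | ⟨j2, hj2⟩
        · obtain ⟨-, hall⟩ := hAcard (i + 2) hs2 hA2'
          have := Hzero (i + 1, j1) hj1
          rw [hall (i + 1, j1)] at this
          omega
        · exact H2 (i + 1, j1) (i + 2, j2)
            (fun h => hs12 ((Prod.ext_iff.1 h).1.symm)) (Hzero _ hj1) (Hzero _ hj2)
    -- now A = {0, vIdx i}
    have hsub : ({0, vIdx i} : Finset (Fin 4)) ⊆ A := by
      intro a ha
      simp only [Finset.mem_insert, Finset.mem_singleton] at ha
      rcases ha with rfl | rfl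
      · exact h0A
      · exact hvi
    have hAeq : A = {0, vIdx i} :=
      (Finset.eq_of_subset_of_card_le hsub (by rw [pair_card i]; exact hA2)).symm
    have hA2' : A.card = 2 := by rw [hAeq, pair_card i]
    have hall : ∀ p : Fin 3 × Fin k, (f p).card = 1 := by
      intro p
      have := Hone p
      have h1 := hf1 p
      omega
    refine Or.inl ⟨i, fun j => if (2 : Fin 3) ∈ f (i, j) then true else false, ?_⟩
    refine Prod.ext hAeq (funext fun p => ?_)
    obtain ⟨p1, p2⟩ := p
    simp only [dec1]
    by_cases hp : p1 = i
    · subst hp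
      simp only [if_pos rfl]
      by_cases h2 : (2 : Fin 3) ∈ f (p1, p2)
      · rw [if_pos h2]
        exact eq_singleton_of_mem (hall _) h2
      · rw [if_neg h2]
        rcases c1 (p1, p2) with h | h
        · exact eq_singleton_of_mem (hall _) h
        · exact absurd h h2
    · simp only [if_neg hp]
      rcases c2 (p1, p2) with h | h | h
      · exfalso
        have := eq_singleton_of_mem (hall _) h
        rcases c1 (p1, p2) with h' | h' <;> rw [this] at h' <;>
          exact absurd (Finset.mem_singleton.1 h') (by decide)
      · exact eq_singleton_of_mem (hall _) h
      · exfalso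
        rw [hAeq] at h
        simp only [Finset.mem_insert, Finset.mem_singleton] at h
        rcases h with h | h
        · exact vIdx_ne_zero p1 h
        · exact hp (vIdx_inj h)
  · -- case ¬α : A = {0}
    have hAeq : A = {0} := by
      apply Finset.eq_singleton_iff_unique_mem.2
      constructor
      · obtain ⟨a, ha⟩ := c4
        rcases fin4_cases a with rfl | ⟨i, rfl⟩
        · exact ha
        · exact absurd ⟨i, ha⟩ hv
      · intro a ha
        rcases fin4_cases a with rfl | ⟨i, rfl⟩
        · rfl
        · exact absurd ⟨i, ha⟩ hv
    have hA1' : A.card = 1 := by rw [hAeq]; exact Finset.card_singleton 0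
    have hsum : ∑ p : Fin 3 × Fin k, (f p).card = 3 * k + 1 := by omega
    have hnv : ∀ p : Fin 3 × Fin k, vIdx p.1 ∉ A := by
      intro p hp; exact hv ⟨p.1, hp⟩
    by_cases hx : ∃ q : Fin 3 × Fin k, (0 : Fin 3) ∈ f q
    · -- case β
      obtain ⟨q, h0q⟩ := hx
      have hq2 : (f q).card = 2 := by
        have := Hzero q h0q
        have := Hone q
        omega
      have hall : ∀ p : Fin 3 × Fin k, p ≠ q → (f p).card = 1 := by
        intro p hp
        have h1 := hf1 p
        by_contra h
        exact H2 q p hp (by omega) (by omega)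
      have hothers : ∀ p : Fin 3 × Fin k, p ≠ q → f p = {1} := by
        intro p hp
        rcases c2 p with h | h | h
        · exfalso
          have := eq_singleton_of_mem (hall p hp) h
          rcases c1 p with h' | h' <;> rw [this] at h' <;>
            exact absurd (Finset.mem_singleton.1 h') (by decide)
        · exact eq_singleton_of_mem (hall p hp) h
        · exact absurd h (hnv p)
      by_cases h2 : (2 : Fin 3) ∈ f q
      · refine Or.inr (Or.inl ⟨q, true, Prod.ext hAeq (funext fun p => ?_)⟩)
        simp only [dec2]
        by_cases hp : p = q
        · subst hp
          rw [if_pos rfl]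
          have hsub : ({0, bitl true} : Finset (Fin 3)) ⊆ f p := by
            intro a ha
            simp only [bitl, if_pos, Finset.mem_insert, Finset.mem_singleton] at ha
            rcases ha with rfl | rfl
            · exact h0q
            · exact h2
          exact (Finset.eq_of_subset_of_card_le hsub (by rw [hq2]; decide)).symm
        · rw [if_neg hp]; exact hothers p hp
      · refine Or.inr (Or.inl ⟨q, false, Prod.ext hAeq (funext fun p => ?_)⟩)
        simp only [dec2]
        by_cases hp : p = q
        · subst hp
          rw [if_pos rfl]
          have h1q : (1 : Fin 3) ∈ f p := by
            rcases c1 p with h | h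
            · exact h
            · exact absurd h h2
          have hsub : ({0, bitl false} : Finset (Fin 3)) ⊆ f p := by
            intro a ha
            simp only [bitl, Finset.mem_insert, Finset.mem_singleton] at ha
            rcases ha with rfl | rfl
            · exact h0q
            · simpa using h1q
          exact (Finset.eq_of_subset_of_card_le hsub (by rw [hq2]; decide)).symm
        · rw [if_neg hp]; exact hothers p hp
    · -- case γ
      push_neg at hx
      have hone : ∀ p : Fin 3 × Fin k, (1 : Fin 3) ∈ f p := by
        intro p
        rcases c2 p with h | h | h
        · exact absurd h (hx p)
        · exact h
        · exact absurd h (hnv p)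
      have hexq : ∃ q : Fin 3 × Fin k, 2 ≤ (f q).card := by
        by_contra h
        push_neg at h
        have : ∑ p : Fin 3 × Fin k, (f p).card = 3 * k := by
          have : ∀ p : Fin 3 × Fin k, (f p).card = 1 := by
            intro p; have := hf1 p; have := h p; omega
          rw [Finset.sum_congr rfl fun p _ => this p]
          simp [Finset.card_univ, card_prod_fin]
        omega
      obtain ⟨q, hq2'⟩ := hexq
      have hq2 : (f q).card = 2 := by
        have := Hone q
        omega
      have hall : ∀ p : Fin 3 × Fin k, p ≠ q → (f p).card = 1 := by
        intro p hp
        have h1 := hf1 p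
        by_contra h
        exact H2 q p hp (by omega) (by omega)
      refine Or.inr (Or.inr ⟨q, Prod.ext hAeq (funext fun p => ?_)⟩)
      simp only [dec3]
      by_cases hp : p = q
      · subst hp
        rw [if_pos rfl]
        obtain ⟨b, hb, hbne⟩ := Finset.exists_mem_ne (s := f p) (by omega) (1 : Fin 3)
        have hb2 : b = 2 := by
          rcases fin3_cases b with rfl | rfl | rfl
          · exact absurd hb (hx p)
          · exact absurd rfl hbne
          · rfl
        subst hb2
        have hsub : ({1, 2} : Finset (Fin 3)) ⊆ f p := by
          intro a ha
          simp only [Finset.mem_insert, Finset.mem_singleton] at ha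
          rcases ha with rfl | rfl
          · exact hone p
          · exact hb
        exact (Finset.eq_of_subset_of_card_le hsub (by rw [hq2]; decide)).symm
      · rw [if_neg hp]
        exact eq_singleton_of_mem (hall p hp) (hone p)

end TkAux

namespace TkAux
open Finset
variable {k : ℕ}

lemma d1_ge : 1 ≤ domCount (Tk k) (3 * k + 1) := by
  classical
  rw [domCount_eq]
  refine Finset.card_pos.2 ⟨(({0} : Finset (Fin 4)), fun _ => ({1} : Finset (Fin 3))), ?_⟩
  rw [Finset.mem_filter]
  refine ⟨Finset.mem_univ _, ⟨?_, ?_, ?_, ?_⟩, ?_⟩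
  · intro p; exact Or.inl (Finset.mem_singleton_self 1)
  · intro p; exact Or.inr (Or.inl (Finset.mem_singleton_self 1))
  · intro i; exact Or.inr (Or.inl (Finset.mem_singleton_self 0))
  · exact ⟨0, Finset.mem_singleton_self 0⟩
  · simp [weight, Finset.card_univ, card_prod_fin]
    omega

lemma d2_le (hk : 1 ≤ k) : domCount (Tk k) (3 * k + 2) ≤ 3 * 2 ^ k + 9 * k := by
  classical
  rw [domCount_eq]
  set T1 := (Finset.univ : Finset (Fin 3 × (Fin k → Bool))).image (fun ig => dec1 ig.1 ig.2)
    with hT1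
  set T2 := (Finset.univ : Finset ((Fin 3 × Fin k) × Bool)).image (fun qc => dec2 qc.1 qc.2)
    with hT2
  set T3 := (Finset.univ : Finset (Fin 3 × Fin k)).image dec3 with hT3
  have hsub : (Finset.univ.filter fun P : PairT k => Cond P ∧ weight P = 3 * k + 2)
      ⊆ T1 ∪ T2 ∪ T3 := by
    intro P hP
    rw [Finset.mem_filter] at hP
    rcases structure2 hk hP.2.1 hP.2.2 with ⟨i, g, rfl⟩ | ⟨q, c, rfl⟩ | ⟨q, rfl⟩
    · exact Finset.mem_union_left _ (Finset.mem_union_left _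
        (Finset.mem_image.2 ⟨(i, g), Finset.mem_univ _, rfl⟩))
    · exact Finset.mem_union_left _ (Finset.mem_union_right _
        (Finset.mem_image.2 ⟨(q, c), Finset.mem_univ _, rfl⟩))
    · exact Finset.mem_union_right _ (Finset.mem_image.2 ⟨q, Finset.mem_univ _, rfl⟩)
  calc (Finset.univ.filter fun P : PairT k => Cond P ∧ weight P = 3 * k + 2).card
      ≤ (T1 ∪ T2 ∪ T3).card := Finset.card_le_card hsub
    _ ≤ (T1 ∪ T2).card + T3.card := Finset.card_union_le _ _
    _ ≤ T1.card + T2.card + T3.card := by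
        have := Finset.card_union_le T1 T2
        omega
    _ ≤ 3 * 2 ^ k + 9 * k := by
        have h1 : T1.card ≤ 3 * 2 ^ k := by
          refine le_trans (Finset.card_image_le) ?_
          simp [Finset.card_univ]
        have h2 : T2.card ≤ 6 * k := by
          refine le_trans (Finset.card_image_le) ?_
          simp [Finset.card_univ]
          omega
        have h3 : T3.card ≤ 3 * k := by
          refine le_trans (Finset.card_image_le) ?_
          simp [Finset.card_univ]
        omega

end TkAux

namespace TkAux
open Finset
variable {k : ℕ}

def A2 (e : Fin 3) : Finset (Fin 4) := {0, vIdx (e + 1), vIdx (e + 2)}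
def A3 (e : Fin 3) : Finset (Fin 4) := {vIdx (e + 1), vIdx (e + 2)}

def enc1 (g : Fin 3 × Fin k → Bool) : PairT k :=
  ({1, 2, 3}, fun p => {bitl (g p)})

def enc2 (e : Fin 3) (g : Fin 2 × Fin k → Bool) : PairT k :=
  (A2 e, fun p => if p.1 = e then {1}
    else if p.1 = e + 1 then {bitl (g (0, p.2))} else {bitl (g (1, p.2))})

def enc3 (e : Fin 3) (j0 : Fin k) (c : Bool) (g : Fin 2 × Fin k → Bool) : PairT k :=
  (A3 e, fun p => if p.1 = e then (if p.2 = j0 then {0, bitl c} else {1})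
    else if p.1 = e + 1 then {bitl (g (0, p.2))} else {bitl (g (1, p.2))})

-- decidable facts
lemma vIdx_mem_123 : ∀ i : Fin 3, vIdx i ∈ ({1, 2, 3} : Finset (Fin 4)) := by decide
lemma bitl_mem (b : Bool) : (1 : Fin 3) ∈ ({bitl b} : Finset (Fin 3)) ∨
    (2 : Fin 3) ∈ ({bitl b} : Finset (Fin 3)) := by cases b <;> decide
lemma bitl_inj : ∀ b b' : Bool, bitl b = bitl b' → b = b' := by decide
lemma fin3_other : ∀ a e : Fin 3, a ≠ e → a = e + 1 ∨ a = e + 2 := by decide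
lemma A2_card : ∀ e : Fin 3, (A2 e).card = 3 := by decide
lemma A3_card : ∀ e : Fin 3, (A3 e).card = 2 := by decide
lemma A2_inj : ∀ e e' : Fin 3, A2 e = A2 e' → e = e' := by decide
lemma A3_inj : ∀ e e' : Fin 3, A3 e = A3 e' → e = e' := by decide
lemma ne_123_A2 : ∀ e : Fin 3, ({1, 2, 3} : Finset (Fin 4)) ≠ A2 e := by decide
lemma ne_123_A3 : ∀ e : Fin 3, ({1, 2, 3} : Finset (Fin 4)) ≠ A3 e := by decide
lemma ne_A2_A3 : ∀ e e' : Fin 3, A2 e ≠ A3 e' := by decide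
lemma vIdx_mem_A2 : ∀ e a : Fin 3, a ≠ e → vIdx a ∈ A2 e := by decide
lemma vIdx_mem_A3 : ∀ e a : Fin 3, a ≠ e → vIdx a ∈ A3 e := by decide
lemma zero_mem_A2 : ∀ e : Fin 3, (0 : Fin 4) ∈ A2 e := by decide
lemma pairc_card : ∀ c : Bool, ({0, bitl c} : Finset (Fin 3)).card = 2 := by decide
lemma pairc_inj : ∀ c c' : Bool, ({0, bitl c} : Finset (Fin 3)) = {0, bitl c'} → c = c' := by
  decide
lemma pairc_ne_one : ∀ c : Bool, ({0, bitl c} : Finset (Fin 3)) ≠ {1} := by decide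
lemma singleton_bitl_ne_one_pair : ∀ b : Bool, ({bitl b} : Finset (Fin 3)) ≠ {0, bitl b} := by
  decide
lemma fin3_succ_ne : ∀ e : Fin 3, e + 1 ≠ e ∧ e + 2 ≠ e ∧ e + 2 ≠ e + 1 := by decide

lemma cond_enc1 (g : Fin 3 × Fin k → Bool) : Cond (enc1 g) := by
  refine ⟨fun p => bitl_mem (g p), fun p => Or.inr (Or.inr (vIdx_mem_123 p.1)),
    fun i => Or.inl (vIdx_mem_123 i), ⟨1, Finset.mem_insert_self 1 _⟩⟩

lemma weight_enc1 (g : Fin 3 × Fin k → Bool) : weight (enc1 g) = 3 * k + 3 := by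
  have h1 : (({1, 2, 3} : Finset (Fin 4))).card = 3 := by decide
  simp only [weight, enc1, h1, Finset.card_singleton]
  simp [Finset.card_univ, card_prod_fin]
  omega

lemma cond_enc2 (e : Fin 3) (g : Fin 2 × Fin k → Bool) : Cond (enc2 e g) := by
  refine ⟨fun p => ?_, fun p => ?_, fun i => Or.inr (Or.inl (zero_mem_A2 e)),
    ⟨0, zero_mem_A2 e⟩⟩
  · simp only [enc2]
    split
    · exact Or.inl (Finset.mem_singleton_self 1)
    · split
      · exact bitl_mem _
      · exact bitl_mem _
  · simp only [enc2]
    split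
    · exact Or.inr (Or.inl (Finset.mem_singleton_self 1))
    · exact Or.inr (Or.inr (vIdx_mem_A2 e p.1 (by assumption)))

lemma weight_enc2 (e : Fin 3) (g : Fin 2 × Fin k → Bool) : weight (enc2 e g) = 3 * k + 3 := by
  have hcard : ∀ p : Fin 3 × Fin k, ((enc2 e g).2 p).card = 1 := by
    intro p
    show (if p.1 = e then ({1} : Finset (Fin 3))
      else if p.1 = e + 1 then {bitl (g (0, p.2))} else {bitl (g (1, p.2))}).card = 1
    split
    · exact Finset.card_singleton _
    · split <;> exact Finset.card_singleton _
  simp only [weight]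
  rw [Finset.sum_congr rfl (fun p _ => hcard p)]
  have hA : (enc2 e g).1.card = 3 := A2_card e
  rw [hA]
  simp [Finset.card_univ, card_prod_fin]
  omega

lemma cond_enc3 (e : Fin 3) (j0 : Fin k) (c : Bool) (g : Fin 2 × Fin k → Bool) :
    Cond (enc3 e j0 c g) := by
  refine ⟨fun p => ?_, fun p => ?_, fun i => ?_, ⟨vIdx (e + 1), Finset.mem_insert_self _ _⟩⟩
  · simp only [enc3]
    split
    · split
      · rcases bitl_mem c with h | h
        · exact Or.inl (Finset.mem_insert_of_mem h)
        · exact Or.inr (Finset.mem_insert_of_mem h)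
      · exact Or.inl (Finset.mem_singleton_self 1)
    · split <;> exact bitl_mem _
  · simp only [enc3]
    split
    · split
      · exact Or.inl (Finset.mem_insert_self 0 _)
      · exact Or.inr (Or.inl (Finset.mem_singleton_self 1))
    · exact Or.inr (Or.inr (vIdx_mem_A3 e p.1 (by assumption)))
  · by_cases hi : i = e
    · subst hi
      refine Or.inr (Or.inr ⟨j0, ?_⟩)
      simp only [enc3, if_pos rfl]
      exact Finset.mem_insert_self 0 _
    · exact Or.inl (vIdx_mem_A3 e i hi)

lemma weight_enc3 (e : Fin 3) (j0 : Fin k) (c : Bool) (g : Fin 2 × Fin k → Bool) :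
    weight (enc3 e j0 c g) = 3 * k + 3 := by
  have hcard : ∀ p : Fin 3 × Fin k,
      ((enc3 e j0 c g).2 p).card = 1 + if p = (e, j0) then 1 else 0 := by
    rintro ⟨p1, p2⟩
    show (if p1 = e then (if p2 = j0 then ({0, bitl c} : Finset (Fin 3)) else {1})
      else if p1 = e + 1 then {bitl (g (0, p2))} else {bitl (g (1, p2))}).card
      = 1 + if (p1, p2) = (e, j0) then 1 else 0
    by_cases h1 : p1 = e
    · rw [if_pos h1]
      by_cases h2 : p2 = j0
      · rw [if_pos h2, if_pos (by rw [h1, h2]), pairc_card]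
      · have hne : ((p1, p2) : Fin 3 × Fin k) ≠ (e, j0) := by
          simp only [ne_eq, Prod.mk.injEq, not_and]
          intro _; exact h2
        rw [if_neg h2, if_neg hne, Finset.card_singleton]
    · have hne : ((p1, p2) : Fin 3 × Fin k) ≠ (e, j0) := by
        simp only [ne_eq, Prod.mk.injEq, not_and]
        intro h; exact absurd h h1
      rw [if_neg h1, if_neg hne]
      by_cases h3 : p1 = e + 1
      · rw [if_pos h3, Finset.card_singleton]
      · rw [if_neg h3, Finset.card_singleton]
  simp only [weight]
  rw [Finset.sum_congr rfl (fun p _ => hcard p)]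
  have hA : (enc3 e j0 c g).1.card = 2 := A3_card e
  rw [hA, Finset.sum_add_distrib]
  rw [Finset.sum_ite_eq' Finset.univ ((e, j0) : Fin 3 × Fin k) (fun _ => 1)]
  simp [Finset.card_univ, card_prod_fin]
  omega

end TkAux

namespace TkAux
open Finset
variable {k : ℕ}

lemma fin2_cases (b : Fin 2) : b = 0 ∨ b = 1 := by revert b; decide

lemma enc1_inj : Function.Injective (enc1 (k := k)) := by
  intro g g' h
  funext p
  have h2 := congrFun (congrArg Prod.snd h) p
  simp only [enc1] at h2
  exact bitl_inj _ _ (Finset.singleton_injective h2)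

lemma enc2_snd (e : Fin 3) (g : Fin 2 × Fin k → Bool) (j : Fin k) :
    (enc2 e g).2 (e + 1, j) = {bitl (g (0, j))} ∧
    (enc2 e g).2 (e + 2, j) = {bitl (g (1, j))} := by
  obtain ⟨h1, h2, h3⟩ := fin3_succ_ne e
  constructor
  · show (if (e + 1 : Fin 3) = e then _ else if (e + 1 : Fin 3) = e + 1 then _ else _) = _
    rw [if_neg h1, if_pos rfl]
  · show (if (e + 2 : Fin 3) = e then _ else if (e + 2 : Fin 3) = e + 1 then _ else _) = _
    rw [if_neg h2, if_neg h3]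

lemma enc2_inj :
    Function.Injective (fun eg : Fin 3 × (Fin 2 × Fin k → Bool) => enc2 eg.1 eg.2) := by
  rintro ⟨e, g⟩ ⟨e', g'⟩ h
  simp only at h
  have hfst : A2 e = A2 e' := congrArg Prod.fst h
  have he : e = e' := A2_inj e e' hfst
  subst he
  have hsnd := congrArg Prod.snd h
  refine Prod.ext rfl ?_
  funext bj
  obtain ⟨b, j⟩ := bj
  rcases fin2_cases b with rfl | rfl
  · have := congrFun hsnd (e + 1, j)
    rw [(enc2_snd e g j).1, (enc2_snd e g' j).1] at this
    exact bitl_inj _ _ (Finset.singleton_injective this)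
  · have := congrFun hsnd (e + 2, j)
    rw [(enc2_snd e g j).2, (enc2_snd e g' j).2] at this
    exact bitl_inj _ _ (Finset.singleton_injective this)

lemma enc3_snd (e : Fin 3) (j0 : Fin k) (c : Bool) (g : Fin 2 × Fin k → Bool) (j : Fin k) :
    (enc3 e j0 c g).2 (e, j) = (if j = j0 then {0, bitl c} else {1}) ∧
    (enc3 e j0 c g).2 (e + 1, j) = {bitl (g (0, j))} ∧
    (enc3 e j0 c g).2 (e + 2, j) = {bitl (g (1, j))} := by
  obtain ⟨h1, h2, h3⟩ := fin3_succ_ne e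
  refine ⟨?_, ?_, ?_⟩
  · show (if (e : Fin 3) = e then _ else _) = _
    rw [if_pos rfl]
  · show (if (e + 1 : Fin 3) = e then _ else if (e + 1 : Fin 3) = e + 1 then _ else _) = _
    rw [if_neg h1, if_pos rfl]
  · show (if (e + 2 : Fin 3) = e then _ else if (e + 2 : Fin 3) = e + 1 then _ else _) = _
    rw [if_neg h2, if_neg h3]

lemma enc3_inj :
    Function.Injective (fun t : (Fin 3 × Fin k) × Bool × (Fin 2 × Fin k → Bool) =>
      enc3 t.1.1 t.1.2 t.2.1 t.2.2) := by
  rintro ⟨⟨e, j0⟩, c, g⟩ ⟨⟨e', j0'⟩, c', g'⟩ h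
  simp only at h
  have hfst : A3 e = A3 e' := congrArg Prod.fst h
  have he : e = e' := A3_inj e e' hfst
  subst he
  have hsnd := congrArg Prod.snd h
  have hj : j0 = j0' := by
    by_contra hj
    have := congrFun hsnd (e, j0)
    rw [(enc3_snd e j0 c g j0).1, (enc3_snd e j0' c' g' j0).1] at this
    rw [if_pos rfl, if_neg hj] at this
    exact pairc_ne_one c this
  subst hj
  have hc : c = c' := by
    have := congrFun hsnd (e, j0)
    rw [(enc3_snd e j0 c g j0).1, (enc3_snd e j0 c' g' j0).1, if_pos rfl, if_pos rfl] at this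
    exact pairc_inj c c' this
  subst hc
  refine Prod.ext rfl (Prod.ext rfl ?_)
  funext bj
  obtain ⟨b, j⟩ := bj
  rcases fin2_cases b with rfl | rfl
  · have := congrFun hsnd (e + 1, j)
    rw [(enc3_snd e j0 c g j).2.1, (enc3_snd e j0 c g' j).2.1] at this
    exact bitl_inj _ _ (Finset.singleton_injective this)
  · have := congrFun hsnd (e + 2, j)
    rw [(enc3_snd e j0 c g j).2.2, (enc3_snd e j0 c g' j).2.2] at this
    exact bitl_inj _ _ (Finset.singleton_injective this)

lemma d3_ge : 2 ^ (3 * k) + 3 * 2 ^ (2 * k) + 6 * k * 2 ^ (2 * k)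
    ≤ domCount (Tk k) (3 * k + 3) := by
  classical
  rw [domCount_eq]
  set F1 := (Finset.univ : Finset (Fin 3 × Fin k → Bool)).image (enc1 (k := k)) with hF1
  set F2 := (Finset.univ : Finset (Fin 3 × (Fin 2 × Fin k → Bool))).image
    (fun eg => enc2 eg.1 eg.2) with hF2
  set F3 := (Finset.univ : Finset ((Fin 3 × Fin k) × Bool × (Fin 2 × Fin k → Bool))).image
    (fun t => enc3 t.1.1 t.1.2 t.2.1 t.2.2) with hF3
  have hsub : F1 ∪ F2 ∪ F3 ⊆
      (Finset.univ.filter fun P : PairT k => Cond P ∧ weight P = 3 * k + 3) := by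
    intro P hP
    rw [Finset.mem_union, Finset.mem_union] at hP
    rw [Finset.mem_filter]
    refine ⟨Finset.mem_univ _, ?_⟩
    rcases hP with (hP | hP) | hP
    · obtain ⟨g, -, rfl⟩ := Finset.mem_image.1 hP
      exact ⟨cond_enc1 g, weight_enc1 g⟩
    · obtain ⟨eg, -, rfl⟩ := Finset.mem_image.1 hP
      exact ⟨cond_enc2 eg.1 eg.2, weight_enc2 eg.1 eg.2⟩
    · obtain ⟨t, -, rfl⟩ := Finset.mem_image.1 hP
      exact ⟨cond_enc3 t.1.1 t.1.2 t.2.1 t.2.2, weight_enc3 t.1.1 t.1.2 t.2.1 t.2.2⟩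
  have hd12 : Disjoint F1 F2 := by
    rw [Finset.disjoint_left]
    rintro P hP1 hP2
    obtain ⟨g, -, rfl⟩ := Finset.mem_image.1 hP1
    obtain ⟨eg, -, heq⟩ := Finset.mem_image.1 hP2
    exact ne_123_A2 eg.1 (congrArg Prod.fst heq).symm
  have hd13 : Disjoint F1 F3 := by
    rw [Finset.disjoint_left]
    rintro P hP1 hP3
    obtain ⟨g, -, rfl⟩ := Finset.mem_image.1 hP1
    obtain ⟨t, -, heq⟩ := Finset.mem_image.1 hP3
    exact ne_123_A3 t.1.1 (congrArg Prod.fst heq).symm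
  have hd23 : Disjoint F2 F3 := by
    rw [Finset.disjoint_left]
    rintro P hP2 hP3
    obtain ⟨eg, -, rfl⟩ := Finset.mem_image.1 hP2
    obtain ⟨t, -, heq⟩ := Finset.mem_image.1 hP3
    exact ne_A2_A3 eg.1 t.1.1 (congrArg Prod.fst heq).symm
  have hcard : (F1 ∪ F2 ∪ F3).card = F1.card + F2.card + F3.card := by
    rw [Finset.card_union_of_disjoint (Finset.disjoint_union_left.2 ⟨hd13, hd23⟩),
      Finset.card_union_of_disjoint hd12]
  have h1 : F1.card = 2 ^ (3 * k) := by
    rw [hF1, Finset.card_image_of_injective _ enc1_inj, Finset.card_univ]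
    simp [card_prod_fin]
  have h2 : F2.card = 3 * 2 ^ (2 * k) := by
    rw [hF2, Finset.card_image_of_injective _ enc2_inj, Finset.card_univ]
    simp
  have h3 : F3.card = 6 * k * 2 ^ (2 * k) := by
    rw [hF3, Finset.card_image_of_injective _ enc3_inj, Finset.card_univ]
    simp
    ring
  calc 2 ^ (3 * k) + 3 * 2 ^ (2 * k) + 6 * k * 2 ^ (2 * k)
      = (F1 ∪ F2 ∪ F3).card := by rw [hcard, h1, h2, h3]
    _ ≤ _ := Finset.card_le_card hsub

end TkAux

namespace TkAux

lemma k_sq_le_two_pow (k : ℕ) (hk : 4 ≤ k) : k ^ 2 ≤ 2 ^ k := by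
  induction k, hk using Nat.le_induction with
  | base => norm_num
  | succ n hn ih =>
    have h1 : 2 * n + 1 ≤ n ^ 2 := by nlinarith
    calc (n + 1) ^ 2 = n ^ 2 + (2 * n + 1) := by ring
      _ ≤ n ^ 2 + n ^ 2 := by omega
      _ = 2 * n ^ 2 := by ring
      _ ≤ 2 * 2 ^ n := by omega
      _ = 2 ^ (n + 1) := by ring

end TkAux

theorem domination_polynomial_of_Tk_not_log_concave (k : ℕ) (hk : 4 ≤ k) :
    (domCount (Tk k) (3 * k + 2)) ^ 2 <
      domCount (Tk k) (3 * k + 1) * domCount (Tk k) (3 * k + 3) := by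
  have hk1 : 1 ≤ k := by omega
  have hd2 := TkAux.d2_le (k := k) hk1
  have hd1 := TkAux.d1_ge (k := k)
  have hd3 := TkAux.d3_ge (k := k)
  have h16 : 16 ≤ 2 ^ k := by
    calc (16 : ℕ) = 2 ^ 4 := by norm_num
      _ ≤ 2 ^ k := Nat.pow_le_pow_right (by norm_num) hk
  have hk2 : k ^ 2 ≤ 2 ^ k := TkAux.k_sq_le_two_pow k hk
  have e2 : 2 ^ (2 * k) = (2 ^ k) ^ 2 := by rw [mul_comm, pow_mul]
  have e3 : 2 ^ (3 * k) = (2 ^ k) ^ 3 := by rw [mul_comm, pow_mul]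
  have key : (3 * 2 ^ k + 9 * k) ^ 2
      < (2 ^ k) ^ 3 + 3 * (2 ^ k) ^ 2 + 6 * k * (2 ^ k) ^ 2 := by
    have h1 : 16 * (2 ^ k) ^ 2 ≤ (2 ^ k) ^ 3 := by nlinarith
    have h2 : k ^ 2 * 2 ^ k ≤ 2 ^ k * 2 ^ k := Nat.mul_le_mul_right (2 ^ k) hk2
    nlinarith
  calc (domCount (Tk k) (3 * k + 2)) ^ 2
      ≤ (3 * 2 ^ k + 9 * k) ^ 2 := Nat.pow_le_pow_left hd2 2
    _ < (2 ^ k) ^ 3 + 3 * (2 ^ k) ^ 2 + 6 * k * (2 ^ k) ^ 2 := key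
    _ = 2 ^ (3 * k) + 3 * 2 ^ (2 * k) + 6 * k * 2 ^ (2 * k) := by rw [e2, e3]
    _ = 1 * (2 ^ (3 * k) + 3 * 2 ^ (2 * k) + 6 * k * 2 ^ (2 * k)) := (one_mul _).symm
    _ ≤ domCount (Tk k) (3 * k + 1) * domCount (Tk k) (3 * k + 3) :=
        Nat.mul_le_mul hd1 hd3
end

section
/- For every integer k ≥ 1, the domination number of the tree T_k equals 3k+1, and T_k has exactly one dominating set of cardinality 3k+1, namely {v_0} ∪ {y_{ij} : 1 ≤ i ≤ 3, 1 ≤ j ≤ k}. -/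
open scoped Classical

variable {V : Type*} [Fintype V] [DecidableEq V]

/-- The set $\{v_0\} \cup \{y_{ij} : 1 ≤ i ≤ 3,\ 1 ≤ j ≤ k\}$. -/
noncomputable def SgammaTk (k : ℕ) : Finset (Vk k) :=
  Finset.univ.filter fun v => v = Sum.inl 0 ∨ ∃ i j, v = Sum.inr (i, j, 1)

section TkAux
variable {k : ℕ}

private lemma tk_adj_iff (u v : Vk k) :
    (Tk k).Adj u v ↔ u ≠ v ∧ (tkRel k u v ∨ tkRel k v u) := by
  simp [Tk, SimpleGraph.fromRel_adj]

private lemma fin3cases (l : Fin 3) : l = 0 ∨ l = 1 ∨ l = 2 := by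
  have h := l.isLt
  rcases l with ⟨v, hv⟩
  match v, hv with
  | 0, _ => exact Or.inl rfl
  | 1, _ => exact Or.inr (Or.inl rfl)
  | 2, _ => exact Or.inr (Or.inr rfl)

private lemma adj_z (i : Fin 3) (j : Fin k) (u : Vk k)
    (h : (Tk k).Adj u (Sum.inr (i, j, 2))) : u = Sum.inr (i, j, (1 : Fin 3)) := by
  rw [tk_adj_iff] at h
  obtain ⟨hne, h | h⟩ := h
  · rcases u with a | ⟨i', j', l'⟩
    · exact absurd h.2 (by decide)
    · obtain ⟨h1, h2, h3⟩ := h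
      subst h1; subst h2
      have hl : l' = 1 := by
        have h3' : ((2:Fin 3):ℕ) = (l' : ℕ) + 1 := h3
        have := l'.isLt
        apply Fin.ext; simp at h3' ⊢; omega
      rw [hl]
  · rcases u with a | ⟨i', j', l'⟩
    · exact h.elim
    · obtain ⟨h1, h2, h3⟩ := h
      have h3' : (l' : ℕ) = ((2:Fin 3):ℕ) + 1 := h3
      have := l'.isLt
      simp at h3'; omega

private lemma adj_x (i : Fin 3) (j : Fin k) (u : Vk k)
    (h : (Tk k).Adj u (Sum.inr (i, j, 0))) :
    (∃ a : Fin 4, (a : ℕ) = (i : ℕ) + 1 ∧ u = Sum.inl a) ∨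
      u = Sum.inr (i, j, (1 : Fin 3)) := by
  rw [tk_adj_iff] at h
  obtain ⟨hne, h | h⟩ := h
  · rcases u with a | ⟨i', j', l'⟩
    · exact Or.inl ⟨a, h.1, rfl⟩
    · obtain ⟨h1, h2, h3⟩ := h
      have h3' : ((0:Fin 3):ℕ) = (l' : ℕ) + 1 := h3
      simp at h3'
  · rcases u with a | ⟨i', j', l'⟩
    · exact h.elim
    · obtain ⟨h1, h2, h3⟩ := h
      subst h1; subst h2
      have hl : l' = 1 := by
        have h3' : (l' : ℕ) = ((0:Fin 3):ℕ) + 1 := h3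
        apply Fin.ext; simp at h3' ⊢; omega
      exact Or.inr (by rw [hl])

private lemma adj_v0 (u : Vk k) (h : (Tk k).Adj u (Sum.inl 0)) :
    ∃ a : Fin 4, u = Sum.inl a := by
  rw [tk_adj_iff] at h
  obtain ⟨hne, h | h⟩ := h
  · rcases u with a | ⟨i', j', l'⟩
    · exact ⟨a, rfl⟩
    · exact h.elim
  · rcases u with a | ⟨i', j', l'⟩
    · exact ⟨a, rfl⟩
    · exact absurd h.1 (by simp)

private lemma adj_vb (b : Fin 4) (hb : b ≠ 0) (u : Vk k)
    (h : (Tk k).Adj u (Sum.inl b)) :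
    u = Sum.inl 0 ∨ ∃ i j, u = Sum.inr (i, j, (0 : Fin 3)) := by
  rw [tk_adj_iff] at h
  obtain ⟨hne, h | h⟩ := h
  · rcases u with a | ⟨i', j', l'⟩
    · exact Or.inl (by rw [h.1])
    · exact h.elim
  · rcases u with a | ⟨i', j', l'⟩
    · exact absurd h.1 hb
    · exact Or.inr ⟨i', j', by rw [h.2]⟩

private lemma adj_v0_vb (b : Fin 4) (hb : b ≠ 0) :
    (Tk k).Adj (Sum.inl 0) (Sum.inl b) := by
  rw [tk_adj_iff]
  exact ⟨by simp [Ne.symm hb], Or.inl ⟨rfl, hb⟩⟩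

private lemma adj_y_x (i : Fin 3) (j : Fin k) :
    (Tk k).Adj (Sum.inr (i, j, 1)) (Sum.inr (i, j, 0)) := by
  rw [tk_adj_iff]
  refine ⟨by simp, Or.inr ⟨rfl, rfl, by decide⟩⟩

private lemma adj_y_z (i : Fin 3) (j : Fin k) :
    (Tk k).Adj (Sum.inr (i, j, 1)) (Sum.inr (i, j, 2)) := by
  rw [tk_adj_iff]
  refine ⟨by simp, Or.inl ⟨rfl, rfl, by decide⟩⟩

end TkAux
theorem Tk_domination_number_and_unique_minimum_dominating_set (k : ℕ) (hk : 1 ≤ k) :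
    gamma (Tk k) = 3 * k + 1 ∧
      ∀ S : Finset (Vk k),
        (IsDomSet (Tk k) S ∧ S.card = 3 * k + 1) ↔ S = SgammaTk k := by
  classical
  have hinj1 : Function.Injective
      (fun p : Fin 3 × Fin k => (Sum.inr (p.1, p.2, (1:Fin 3)) : Vk k)) := by
    intro p q h
    simp only [Sum.inr.injEq, Prod.mk.injEq] at h
    exact Prod.ext h.1 h.2.1
  have hSg : SgammaTk k = insert (Sum.inl 0)
      ((Finset.univ : Finset (Fin 3 × Fin k)).image
        fun p => (Sum.inr (p.1, p.2, (1:Fin 3)) : Vk k)) := by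
    ext v
    simp only [SgammaTk, Finset.mem_filter, Finset.mem_univ, true_and,
      Finset.mem_insert, Finset.mem_image]
    constructor
    · rintro (rfl | ⟨i, j, rfl⟩)
      · exact Or.inl rfl
      · exact Or.inr ⟨(i, j), rfl⟩
    · rintro (rfl | ⟨p, rfl⟩)
      · exact Or.inl rfl
      · exact Or.inr ⟨p.1, p.2, rfl⟩
  have hSgcard : (SgammaTk k).card = 3 * k + 1 := by
    rw [hSg, Finset.card_insert_of_notMem (by simp),
      Finset.card_image_of_injective _ hinj1, Finset.card_univ, Fintype.card_prod,
      Fintype.card_fin, Fintype.card_fin]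
  have h0mem : (Sum.inl 0 : Vk k) ∈ SgammaTk k := by
    simp [SgammaTk]
  have hymem : ∀ (i : Fin 3) (j : Fin k), (Sum.inr (i, j, (1:Fin 3)) : Vk k) ∈ SgammaTk k := by
    intro i j; simp [SgammaTk]
  have hdom : IsDomSet (Tk k) (SgammaTk k) := by
    intro v
    rcases v with a | ⟨i, j, l⟩
    · by_cases ha : a = 0
      · subst ha; exact Or.inl h0mem
      · exact Or.inr ⟨_, h0mem, adj_v0_vb a ha⟩
    · rcases fin3cases l with rfl | rfl | rfl
      · exact Or.inr ⟨_, hymem i j, adj_y_x i j⟩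
      · exact Or.inl (hymem i j)
      · exact Or.inr ⟨_, hymem i j, adj_y_z i j⟩
  have key : ∀ S : Finset (Vk k), IsDomSet (Tk k) S →
      3 * k + 1 ≤ S.card ∧ (S.card = 3 * k + 1 → S = SgammaTk k) := by
    intro S hS
    have hleg : ∀ (i : Fin 3) (j : Fin k),
        (Sum.inr (i, j, (1:Fin 3)) : Vk k) ∈ S ∨ (Sum.inr (i, j, (2:Fin 3)) : Vk k) ∈ S := by
      intro i j
      rcases hS (Sum.inr (i, j, 2)) with h | ⟨u, hu, hadj⟩
      · exact Or.inr h
      · rw [adj_z i j u hadj] at hu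
        exact Or.inl hu
    obtain ⟨a, ha⟩ : ∃ a : Fin 4, (Sum.inl a : Vk k) ∈ S := by
      rcases hS (Sum.inl 0) with h | ⟨u, hu, hadj⟩
      · exact ⟨0, h⟩
      · obtain ⟨a, rfl⟩ := adj_v0 u hadj; exact ⟨a, hu⟩
    set g : Fin 3 × Fin k → Vk k := fun p =>
      if Sum.inr (p.1, p.2, (1:Fin 3)) ∈ S then Sum.inr (p.1, p.2, (1:Fin 3))
      else Sum.inr (p.1, p.2, (2:Fin 3)) with hg
    have hgS : ∀ p, g p ∈ S := by
      intro p
      by_cases h : (Sum.inr (p.1, p.2, (1:Fin 3)) : Vk k) ∈ S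
      · simp [hg, h]
      · rcases hleg p.1 p.2 with h1 | h2
        · exact absurd h1 h
        · simpa [hg, h] using h2
    have hgform : ∀ p, g p = Sum.inr (p.1, p.2, (1:Fin 3)) ∨
        g p = Sum.inr (p.1, p.2, (2:Fin 3)) := by
      intro p
      by_cases h : (Sum.inr (p.1, p.2, (1:Fin 3)) : Vk k) ∈ S <;> simp [hg, h]
    have hginj : Function.Injective g := by
      intro p q h
      rcases hgform p with hp | hp <;> rcases hgform q with hq | hq <;>
        rw [hp, hq] at h <;>
        simp only [Sum.inr.injEq, Prod.mk.injEq] at h <;>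
        first
          | exact Prod.ext h.1 h.2.1
          | exact absurd h.2.2 (by decide)
    have hgneinl : ∀ (p) (c : Fin 4), g p ≠ Sum.inl c := by
      intro p c h
      rcases hgform p with h' | h' <;> rw [h'] at h <;> exact absurd h (by simp)
    have hgne0 : ∀ (p) (i : Fin 3) (j : Fin k), g p ≠ Sum.inr (i, j, (0:Fin 3)) := by
      intro p i j h
      rcases hgform p with h' | h' <;> rw [h'] at h <;>
        simp only [Sum.inr.injEq, Prod.mk.injEq] at h <;>
        exact absurd h.2.2 (by decide)
    set W : Finset (Vk k) := insert (Sum.inl a) (Finset.univ.image g) with hW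
    have hWsub : W ⊆ S := by
      intro v hv
      rw [hW, Finset.mem_insert] at hv
      rcases hv with rfl | hv
      · exact ha
      · obtain ⟨p, -, rfl⟩ := Finset.mem_image.1 hv; exact hgS p
    have hWcard : W.card = 3 * k + 1 := by
      rw [hW, Finset.card_insert_of_notMem, Finset.card_image_of_injective _ hginj,
        Finset.card_univ, Fintype.card_prod, Fintype.card_fin, Fintype.card_fin]
      intro hmem
      obtain ⟨p, -, hp⟩ := Finset.mem_image.1 hmem
      exact hgneinl p a hp
    refine ⟨hWcard ▸ Finset.card_le_card hWsub, ?_⟩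
    intro hcard
    have hSW : S = W :=
      (Finset.eq_of_subset_of_card_le hWsub (by rw [hWcard, hcard])).symm
    have hmemS : ∀ v : Vk k, v ∈ S ↔ (v = Sum.inl a ∨ ∃ p, g p = v) := by
      intro v
      rw [hSW, hW]
      simp [Finset.mem_insert, Finset.mem_image]
    have ha0 : a = 0 := by
      by_contra hne0
      obtain ⟨b, hb0, hba⟩ : ∃ b : Fin 4, b ≠ 0 ∧ b ≠ a := by
        by_cases h1 : a = 1
        · exact ⟨2, by decide, by rw [h1]; decide⟩
        · exact ⟨1, by decide, fun hh => h1 hh.symm⟩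
      rcases hS (Sum.inl b) with hmem | ⟨u, hu, hadj⟩
      · rw [hmemS] at hmem
        rcases hmem with h | ⟨p, h⟩
        · exact hba (Sum.inl.inj h)
        · exact hgneinl p b h
      · rcases adj_vb b hb0 u hadj with rfl | ⟨i, j, rfl⟩
        · rw [hmemS] at hu
          rcases hu with h | ⟨p, h⟩
          · exact hne0 (Sum.inl.inj h).symm
          · exact hgneinl p 0 h
        · rw [hmemS] at hu
          rcases hu with h | ⟨p, h⟩
          · exact absurd h (by simp)
          · exact hgne0 p i j h
    subst ha0
    have hgy : ∀ p : Fin 3 × Fin k, g p = Sum.inr (p.1, p.2, (1:Fin 3)) := by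
      intro p
      by_cases hyS : (Sum.inr (p.1, p.2, (1:Fin 3)) : Vk k) ∈ S
      · simp [hg, hyS]
      · exfalso
        rcases hS (Sum.inr (p.1, p.2, (0:Fin 3))) with hmem | ⟨u, hu, hadj⟩
        · rw [hmemS] at hmem
          rcases hmem with h | ⟨q, h⟩
          · exact absurd h (by simp)
          · exact hgne0 q p.1 p.2 h
        · rcases adj_x p.1 p.2 u hadj with ⟨c, hc, rfl⟩ | rfl
          · rw [hmemS] at hu
            rcases hu with h | ⟨q, h⟩
            · rw [Sum.inl.inj h] at hc
              simp at hc
            · exact hgneinl q c h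
          · exact hyS hu
    have hgfun : g = fun p : Fin 3 × Fin k => (Sum.inr (p.1, p.2, (1:Fin 3)) : Vk k) :=
      funext hgy
    rw [hSW, hW, hgfun, hSg]
  refine ⟨?_, ?_⟩
  · apply le_antisymm
    · exact Nat.sInf_le (⟨SgammaTk k, hdom, hSgcard⟩ : ∃ S : Finset (Vk k), IsDomSet (Tk k) S ∧ S.card = 3 * k + 1)
    · unfold gamma
      have hne : {n | ∃ S : Finset (Vk k), IsDomSet (Tk k) S ∧ S.card = n}.Nonempty :=
        ⟨3 * k + 1, SgammaTk k, hdom, hSgcard⟩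
      obtain ⟨S, hS, hc⟩ := Nat.sInf_mem hne
      rw [← hc]
      exact (key S hS).1
  · intro S
    constructor
    · rintro ⟨hS, hc⟩
      exact (key S hS).2 hc
    · rintro rfl
      exact ⟨hdom, hSgcard⟩
end

section
/- For a finite simple graph G on n vertices and every integer i ≥ 1, a(G,i) = i · d_i(G) − (n − i + 1) · d_{i−1}(G), where the equality is of integers. -/
open scoped Classical

variable {V : Type*} [Fintype V] [DecidableEq V]

lemma isDomSet_mono {G : SimpleGraph V} {T S : Finset V} (h : T ⊆ S) (hT : IsDomSet G T) :
    IsDomSet G S := by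
  intro v
  rcases hT v with hv | ⟨u, hu, hadj⟩
  · exact Or.inl (h hv)
  · exact Or.inr ⟨u, h hu, hadj⟩

theorem aTotal_eq (G : SimpleGraph V) (i : ℕ) (hi : 1 ≤ i) :
    (aTotal G i : ℤ) =
      (i : ℤ) * domCount G i - ((Fintype.card V : ℤ) - i + 1) * domCount G (i - 1) := by
  classical
  set n := Fintype.card V with hn
  set F := Finset.univ.filter fun S : Finset V => IsDomSet G S ∧ S.card = i with hF
  set F' := Finset.univ.filter fun S : Finset V => IsDomSet G S ∧ S.card = i - 1 with hF'
  have key : ∑ S ∈ F, (S.filter fun v => IsDomSet G (S.erase v)).card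
      = ∑ T ∈ F', (Finset.univ \ T).card := by
    rw [← Finset.card_sigma, ← Finset.card_sigma]
    apply Finset.card_bij (fun p _ => (⟨p.1.erase p.2, p.2⟩ : Σ _ : Finset V, V))
    · rintro ⟨S, v⟩ hp
      rw [Finset.mem_sigma] at hp ⊢
      obtain ⟨hS, hv⟩ := hp
      rw [hF, Finset.mem_filter] at hS
      rw [Finset.mem_filter] at hv
      obtain ⟨hvS, hdom⟩ := hv
      refine ⟨?_, ?_⟩
      · rw [hF', Finset.mem_filter]
        refine ⟨Finset.mem_univ _, hdom, ?_⟩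
        rw [Finset.card_erase_of_mem hvS, hS.2.2]
      · simp [Finset.mem_sdiff]
    · rintro ⟨S, v⟩ hp ⟨S', v'⟩ hp' heq
      rw [Finset.mem_sigma, Finset.mem_filter] at hp hp'
      simp only [Sigma.mk.inj_iff, heq_eq_eq] at heq ⊢
      obtain ⟨h1, h2⟩ := heq
      subst h2
      refine ⟨?_, rfl⟩
      have hv : v ∈ S := (Finset.mem_filter.mp hp.2).1
      have hv' : v ∈ S' := (Finset.mem_filter.mp hp'.2).1
      rw [← Finset.insert_erase hv, ← Finset.insert_erase hv', h1]
    · rintro ⟨T, v⟩ ht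
      rw [Finset.mem_sigma] at ht
      obtain ⟨hT, hv⟩ := ht
      rw [hF', Finset.mem_filter] at hT
      rw [Finset.mem_sdiff] at hv
      have hvT : v ∉ T := hv.2
      refine ⟨⟨insert v T, v⟩, ?_, ?_⟩
      · rw [Finset.mem_sigma]
        constructor
        · rw [hF, Finset.mem_filter]
          refine ⟨Finset.mem_univ _, isDomSet_mono (Finset.subset_insert v T) hT.2.1, ?_⟩
          rw [Finset.card_insert_of_notMem hvT, hT.2.2]
          omega
        · rw [Finset.mem_filter]
          refine ⟨Finset.mem_insert_self v T, ?_⟩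
          rw [Finset.erase_insert hvT]
          exact hT.2.1
      · simp [Finset.erase_insert hvT]
  have split : ∀ S ∈ F, (aSet G S).card + (S.filter fun v => IsDomSet G (S.erase v)).card = i := by
    intro S hS
    rw [hF, Finset.mem_filter] at hS
    have := Finset.card_filter_add_card_filter_not
      (s := S) (p := fun v => IsDomSet G (S.erase v))
    unfold aSet
    omega
  have h1 : aTotal G i + ∑ S ∈ F, (S.filter fun v => IsDomSet G (S.erase v)).card = i * F.card := by
    unfold aTotal
    rw [← hF, ← Finset.sum_add_distrib]
    rw [Finset.sum_congr rfl split, Finset.sum_const, smul_eq_mul, mul_comm]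
  have h2 : ∑ T ∈ F', ((Finset.univ \ T).card : ℤ) = ((n : ℤ) - i + 1) * F'.card := by
    have : ∀ T ∈ F', ((Finset.univ \ T).card : ℤ) = (n : ℤ) - i + 1 := by
      intro T hT
      rw [hF', Finset.mem_filter] at hT
      have hle : T.card ≤ n := Finset.card_le_univ T
      rw [Finset.card_sdiff_of_subset (Finset.subset_univ T), Finset.card_univ, ← hn, hT.2.2]
      rw [hT.2.2] at hle
      omega
    rw [Finset.sum_congr rfl this, Finset.sum_const, nsmul_eq_mul, mul_comm]
  have hd : domCount G i = F.card := rfl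
  have hd' : domCount G (i - 1) = F'.card := rfl
  have hkey' : (∑ S ∈ F, ((S.filter fun v => IsDomSet G (S.erase v)).card) : ℤ)
      = ((n : ℤ) - i + 1) * F'.card := by
    rw [← h2]
    exact_mod_cast key
  have h1' : (aTotal G i : ℤ) + ∑ S ∈ F, ((S.filter fun v => IsDomSet G (S.erase v)).card : ℤ)
      = (i : ℤ) * F.card := by exact_mod_cast h1
  rw [hd, hd']
  push_cast at hkey' h1' ⊢
  linarith
end

section
/- For a finite simple graph G on n vertices and every integer i ≥ 1, d_i(G) ≤ d_{i−1}(G) if and only if a(G,i) ≤ (2i − n − 1) · d_i(G), where the inequality on the right is an inequality of integers. -/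
open scoped Classical

variable {V : Type*} [Fintype V] [DecidableEq V]

lemma domset_mono {G : SimpleGraph V} {S T : Finset V} (h : IsDomSet G S) (hST : S ⊆ T) :
    IsDomSet G T := fun v =>
  (h v).imp (fun hv => hST hv) (fun ⟨u, hu, ha⟩ => ⟨u, hST hu, ha⟩)

lemma key_identity (G : SimpleGraph V) (i : ℕ) (hi : 1 ≤ i) :
    aTotal G i + (Fintype.card V - (i - 1)) * domCount G (i - 1) = i * domCount G i := by
  classical
  set D : Finset (Finset V) :=
    Finset.univ.filter (fun S : Finset V => IsDomSet G S ∧ S.card = i) with hD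
  set D' : Finset (Finset V) :=
    Finset.univ.filter (fun S : Finset V => IsDomSet G S ∧ S.card = i - 1) with hD'
  have h1 : aTotal G i + ∑ S ∈ D, (S.filter fun v => IsDomSet G (S.erase v)).card
      = ∑ S ∈ D, S.card := by
    rw [aTotal, ← Finset.sum_add_distrib]
    exact Finset.sum_congr rfl fun S _ => by
      rw [add_comm, aSet]
      exact Finset.card_filter_add_card_filter_not _
  have h2 : ∑ S ∈ D, S.card = i * domCount G i := by
    rw [domCount, ← hD, Finset.sum_congr rfl (fun S hS => ((Finset.mem_filter.mp hS).2.2 : S.card = i)),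
      Finset.sum_const, smul_eq_mul, mul_comm]
  have h3 : ∑ S ∈ D, (S.filter fun v => IsDomSet G (S.erase v)).card
      = (Fintype.card V - (i - 1)) * domCount G (i - 1) := by
    have hb : (D.sigma fun S => S.filter fun v => IsDomSet G (S.erase v)).card
        = (D'.sigma fun T => Tᶜ).card := by
      apply Finset.card_bij' (fun p _ => (⟨p.1.erase p.2, p.2⟩ : Σ _ : Finset V, V))
        (fun p _ => (⟨insert p.2 p.1, p.2⟩ : Σ _ : Finset V, V))
      · rintro ⟨S, v⟩ hp
        rw [Finset.mem_sigma] at hp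
        obtain ⟨hS, hv⟩ := hp
        rw [Finset.mem_filter] at hv
        simp only [hD, Finset.mem_filter, Finset.mem_univ, true_and] at hS
        rw [Finset.mem_sigma]
        constructor
        · simp only [hD', Finset.mem_filter, Finset.mem_univ, true_and]
          exact ⟨hv.2, by rw [Finset.card_erase_of_mem hv.1, hS.2]⟩
        · simp [Finset.mem_compl]
      · rintro ⟨T, v⟩ hp
        rw [Finset.mem_sigma] at hp
        obtain ⟨hT, hv⟩ := hp
        rw [Finset.mem_compl] at hv
        simp only [hD', Finset.mem_filter, Finset.mem_univ, true_and] at hT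
        rw [Finset.mem_sigma]
        constructor
        · simp only [hD, Finset.mem_filter, Finset.mem_univ, true_and]
          refine ⟨domset_mono hT.1 (Finset.subset_insert _ _), ?_⟩
          rw [Finset.card_insert_of_notMem hv, hT.2]
          omega
        · rw [Finset.mem_filter]
          refine ⟨Finset.mem_insert_self _ _, ?_⟩
          rw [Finset.erase_insert hv]
          exact hT.1
      · rintro ⟨S, v⟩ hp
        rw [Finset.mem_sigma] at hp
        have hv := (Finset.mem_filter.mp hp.2).1
        simp [Finset.insert_erase hv]
      · rintro ⟨T, v⟩ hp
        rw [Finset.mem_sigma] at hp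
        have hv := Finset.mem_compl.mp hp.2
        simp [Finset.erase_insert hv]
    rw [← Finset.card_sigma, hb, Finset.card_sigma]
    have : ∀ T ∈ D', Tᶜ.card = Fintype.card V - (i - 1) := by
      intro T hT
      rw [Finset.card_compl, (Finset.mem_filter.mp hT).2.2]
    rw [Finset.sum_congr rfl this, Finset.sum_const, smul_eq_mul, mul_comm, domCount]
  omega

theorem domCount_le_iff (G : SimpleGraph V) (i : ℕ) (hi : 1 ≤ i) :
    domCount G i ≤ domCount G (i - 1) ↔
      (aTotal G i : ℤ) ≤ (2 * (i : ℤ) - (Fintype.card V : ℤ) - 1) * domCount G i := by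
  classical
  set n := Fintype.card V with hn
  by_cases hin : i ≤ n
  · have hkey := key_identity G i hi
    have h1 : ((Fintype.card V - (i - 1) : ℕ) : ℤ) = (n : ℤ) - i + 1 := by
      rw [← hn]; omega
    have hkeyZ : (aTotal G i : ℤ) + ((n : ℤ) - i + 1) * domCount G (i - 1)
        = i * domCount G i := by
      have := congrArg (fun k : ℕ => (k : ℤ)) hkey
      push_cast at this
      rw [← h1]; push_cast
      linarith [this]
    have hpos : (0 : ℤ) < (n : ℤ) - i + 1 := by omega
    rw [show ((2 : ℤ) * i - n - 1) = i - ((n : ℤ) - i + 1) by ring]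
    constructor
    · intro h
      have h' : ((domCount G i : ℤ)) ≤ (domCount G (i - 1) : ℤ) := by exact_mod_cast h
      nlinarith
    · intro h
      have h' : ((domCount G i : ℤ)) ≤ (domCount G (i - 1) : ℤ) := by nlinarith
      exact_mod_cast h'
  · have hzero : domCount G i = 0 := by
      rw [domCount, Finset.card_eq_zero, Finset.filter_eq_empty_iff]
      intro S _
      rintro ⟨-, hcard⟩
      exact hin (hcard ▸ hn ▸ S.card_le_univ.trans_eq rfl)
    have hazero : aTotal G i = 0 := by
      rw [aTotal, Finset.sum_eq_zero_iff]
      intro S hS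
      exfalso
      have := (Finset.mem_filter.mp hS).2.2
      exact hin (this ▸ hn ▸ S.card_le_univ.trans_eq rfl)
    simp [hzero, hazero]
end

section
/- Let T be a tree on n vertices. Then for every integer i with γ(T) < i ≤ ⌊(n + 2γ(T) + 1)/3⌋, one has d_{i−1}(T) ≤ d_i(T); that is, the coefficients of the domination polynomial are non-decreasing from index γ(T) up to index ⌊(n + 2γ(T) + 1)/3⌋. -/
open scoped Classical

variable {V : Type*} [Fintype V] [DecidableEq V]

/-!
Double counting the pairs `(S, v)` with `S` a dominating set of size `i` and `v ∈ S` not critical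
gives `(n - i + 1) d_{i-1} = i d_i - a(G, i)`. In a tree every dominating set `S` has
`|a(S)| ≥ 2γ - |S|`: each vertex whose closed neighbourhood misses `a(S)` sees at least two
non-critical vertices of `S`, these non-critical vertices can be 2-coloured so that every such
neighbourhood sees both colours (peel off a vertex farthest from a root), and `a(S)` together with
either colour class dominates. So `a(G, i) ≥ (2γ - i) d_i`, and `i ≤ (n + 2γ + 1) / 3` is exactly
`2i - 2γ ≤ n - i + 1`.
-/

open Finset

namespace SimpleGraph

variable {α : Type*} {G : SimpleGraph α}

lemma IsTree.eq_of_adj_of_dist_le (hT : G.IsTree) {r ℓ u v : α} (hu : G.Adj ℓ u)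
    (hv : G.Adj ℓ v) (hdu : G.dist r u ≤ G.dist r ℓ) (hdv : G.dist r v ≤ G.dist r ℓ) :
    u = v := by
  -- both are the penultimate vertex of the unique path from `r` to `ℓ`
  have geodesic (w : α) (hw : G.Adj ℓ w) (hd : G.dist r w ≤ G.dist r ℓ) :
      ∃ p : G.Walk r w, (p.concat hw.symm).IsPath := by
    obtain ⟨p, -, hp⟩ := hT.connected.exists_path_of_dist r w
    refine ⟨p, (p.concat hw.symm).isPath_of_length_eq_dist ?_⟩
    have := hT.dist_eq_dist_add_one_of_adj r hw
    rw [Walk.length_concat, hp]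
    omega
  obtain ⟨p, hp⟩ := geodesic u hu hdu
  obtain ⟨q, hq⟩ := geodesic v hv hdv
  exact (Walk.concat_inj ((hT.existsUnique_path r ℓ).unique hp hq)).1

lemma IsTree.exists_mem_adj_subsingleton (hT : G.IsTree) {R : Finset α} (hR : R.Nonempty) :
    ∃ ℓ ∈ R, ∀ u ∈ R, ∀ v ∈ R, G.Adj ℓ u → G.Adj ℓ v → u = v := by
  obtain ⟨r, -⟩ := id hR
  obtain ⟨ℓ, hℓ, hmax⟩ := R.exists_max_image (G.dist r) hR
  exact ⟨ℓ, hℓ, fun u hu v hv hℓu hℓv =>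
    hT.eq_of_adj_of_dist_le hℓu hℓv (hmax u hu) (hmax v hv)⟩

end SimpleGraph

variable {G : SimpleGraph V}

lemma mem_closedNbhd {u v : V} : u ∈ closedNbhd G v ↔ u = v ∨ G.Adj v u := by
  simp [closedNbhd]

lemma self_mem_closedNbhd (v : V) : v ∈ closedNbhd G v :=
  mem_closedNbhd.mpr (Or.inl rfl)

lemma isDomSet_iff {S : Finset V} : IsDomSet G S ↔ ∀ v, (closedNbhd G v ∩ S).Nonempty := by
  simp only [IsDomSet, Finset.Nonempty, mem_inter, mem_closedNbhd]
  refine forall_congr' fun v => ⟨?_, ?_⟩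
  · rintro (hv | ⟨u, hu, huv⟩)
    exacts [⟨v, Or.inl rfl, hv⟩, ⟨u, Or.inr huv.symm, hu⟩]
  · rintro ⟨u, rfl | hvu, hu⟩
    exacts [Or.inl hu, Or.inr ⟨u, hu, hvu.symm⟩]

lemma isDomSet_of_subset {S T : Finset V} (hST : S ⊆ T) (hS : IsDomSet G S) : IsDomSet G T :=
  isDomSet_iff.mpr fun v => (isDomSet_iff.mp hS v).mono (inter_subset_inter_left hST)

lemma two_le_card_closedNbhd_inter_sdiff_aSet {S : Finset V} (hS : IsDomSet G S) {w : V}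
    (hw : Disjoint (closedNbhd G w) (aSet G S)) :
    2 ≤ #(closedNbhd G w ∩ (S \ aSet G S)) := by
  have hsplit : closedNbhd G w ∩ (S \ aSet G S) = closedNbhd G w ∩ S := by
    rw [← inter_sdiff_assoc, (hw.mono_left inter_subset_left).sdiff_eq_left]
  rw [hsplit]
  by_contra! hle
  obtain ⟨s, hs⟩ := isDomSet_iff.mp hS w
  have hsS := (mem_inter.mp hs).2
  have hsA : s ∉ aSet G S := disjoint_left.mp hw (mem_inter.mp hs).1
  have hdom : IsDomSet G (S.erase s) := by simpa [aSet, hsS] using hsA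
  obtain ⟨t, ht⟩ := isDomSet_iff.mp hdom w
  rw [inter_erase, mem_erase] at ht
  exact ht.1 (card_le_one.mp (by omega) t ht.2 s hs)

def SplitsNbhds (G : SimpleGraph V) (B W X : Finset V) : Prop :=
  ∀ w ∈ W, (closedNbhd G w ∩ X).Nonempty ∧ (closedNbhd G w ∩ (B \ X)).Nonempty

lemma SplitsNbhds.extend {B W W' X : Finset V} {ℓ z : V} (hℓ : ℓ ∈ B)
    (hXB : X ⊆ B.erase ℓ) (hX : SplitsNbhds G (B.erase ℓ) W' X)
    (hdrop : ∀ w ∈ W, w ∉ W' → ℓ ∈ closedNbhd G w ∧ z ∈ closedNbhd G w ∩ B.erase ℓ) :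
    ∃ Y ⊆ B, SplitsNbhds G B W Y := by
  have hℓX : ℓ ∉ X := fun h => notMem_erase ℓ B (hXB h)
  have keep (Y : Finset V) (hXY : X ⊆ Y) (hY : B.erase ℓ \ X ⊆ B \ Y) (w : V) (hw : w ∈ W') :
      (closedNbhd G w ∩ Y).Nonempty ∧ (closedNbhd G w ∩ (B \ Y)).Nonempty :=
    ⟨(hX w hw).1.mono (inter_subset_inter_left hXY),
      (hX w hw).2.mono (inter_subset_inter_left hY)⟩
  by_cases hzX : z ∈ X
  · refine ⟨X, hXB.trans (erase_subset ℓ B), fun w hw => ?_⟩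
    by_cases hw' : w ∈ W'
    · exact keep X subset_rfl (sdiff_subset_sdiff (erase_subset ℓ B) subset_rfl) w hw'
    obtain ⟨hℓw, hzw⟩ := hdrop w hw hw'
    exact ⟨⟨z, mem_inter.mpr ⟨(mem_inter.mp hzw).1, hzX⟩⟩,
      ⟨ℓ, mem_inter.mpr ⟨hℓw, mem_sdiff.mpr ⟨hℓ, hℓX⟩⟩⟩⟩
  · refine ⟨insert ℓ X, insert_subset hℓ (hXB.trans (erase_subset ℓ B)), fun w hw => ?_⟩
    by_cases hw' : w ∈ W'
    · refine keep _ (subset_insert ℓ X) (fun x hx => ?_) w hw'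
      simp only [mem_sdiff, mem_erase, mem_insert] at hx ⊢
      tauto
    obtain ⟨hℓw, hzw⟩ := hdrop w hw hw'
    simp only [mem_inter, mem_erase] at hzw
    refine ⟨⟨ℓ, mem_inter.mpr ⟨hℓw, mem_insert_self ℓ X⟩⟩, ⟨z, ?_⟩⟩
    simp only [mem_inter, mem_sdiff, mem_insert]
    tauto

lemma exists_common_partner {B W : Finset V} {ℓ : V}
    (hleaf : ∀ u ∈ B ∪ W, ∀ v ∈ B ∪ W, G.Adj ℓ u → G.Adj ℓ v → u = v)
    (hW : ∀ w ∈ W, 2 ≤ #(closedNbhd G w ∩ B)) :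
    ∃ z, ∀ w ∈ W, #(closedNbhd G w ∩ B.erase ℓ) < 2 →
      ℓ ∈ closedNbhd G w ∧ z ∈ closedNbhd G w ∩ B.erase ℓ := by
  set D := W.filter fun w => #(closedNbhd G w ∩ B.erase ℓ) < 2
  have hD (w : V) (hw : w ∈ D) :
      ℓ ∈ closedNbhd G w ∧ #(closedNbhd G w ∩ B.erase ℓ) = 1 := by
    obtain ⟨hwW, hlt⟩ := mem_filter.mp hw
    have h2 := hW w hwW
    rw [inter_erase] at hlt ⊢
    by_cases hℓ : ℓ ∈ closedNbhd G w ∩ B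
    · rw [card_erase_of_mem hℓ] at hlt ⊢
      exact ⟨(mem_inter.mp hℓ).1, by omega⟩
    · rw [erase_eq_of_notMem hℓ] at hlt
      omega
  have hadj (u : V) (hu : u ∈ D) (huℓ : u ≠ ℓ) : G.Adj ℓ u :=
    ((mem_closedNbhd.mp (hD u hu).1).resolve_left huℓ.symm).symm
  have partner (w : V) (hw : w ∈ D) (hwℓ : w ≠ ℓ) (y : V)
      (hy : y ∈ closedNbhd G ℓ ∩ B.erase ℓ) : y = w := by
    simp only [mem_inter, mem_erase, mem_closedNbhd] at hy
    exact hleaf y (mem_union_left W hy.2.2) w (mem_union_right B (mem_filter.mp hw).1)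
      (hy.1.resolve_left hy.2.1) (hadj w hw hwℓ)
  rcases D.eq_empty_or_nonempty with hD0 | ⟨w₀, hw₀⟩
  · refine ⟨ℓ, fun w hw hlt => ?_⟩
    have hwD : w ∈ D := mem_filter.mpr ⟨hw, hlt⟩
    simp [hD0] at hwD
  obtain ⟨z, hz⟩ := card_eq_one.mp (hD w₀ hw₀).2
  have hzw₀ : z ∈ closedNbhd G w₀ ∩ B.erase ℓ := hz ▸ mem_singleton_self z
  refine ⟨z, fun w hwW hlt => ⟨(hD w (mem_filter.mpr ⟨hwW, hlt⟩)).1, ?_⟩⟩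
  have hw : w ∈ D := mem_filter.mpr ⟨hwW, hlt⟩
  by_cases hww₀ : w = w₀
  · exact hww₀ ▸ hzw₀
  by_cases hw₀ℓ : w₀ = ℓ
  · have hzw : z = w := partner w hw (hw₀ℓ ▸ hww₀) z (hw₀ℓ ▸ hzw₀)
    exact mem_inter.mpr ⟨hzw ▸ self_mem_closedNbhd z, (mem_inter.mp hzw₀).2⟩
  by_cases hwℓ : w = ℓ
  · obtain ⟨y, hy⟩ := card_eq_one.mp (hD w hw).2
    rw [hwℓ] at hy
    have hyD : y ∈ closedNbhd G ℓ ∩ B.erase ℓ := hy ▸ mem_singleton_self y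
    have hyw₀ : y = w₀ := partner w₀ hw₀ hw₀ℓ y hyD
    have hw₀z : w₀ ∈ closedNbhd G w₀ ∩ B.erase ℓ :=
      mem_inter.mpr ⟨self_mem_closedNbhd w₀, hyw₀ ▸ (mem_inter.mp hyD).2⟩
    rw [hz, mem_singleton] at hw₀z
    rw [hwℓ, hy, mem_singleton, ← hw₀z, hyw₀]
  exact absurd (hleaf w (mem_union_right B hwW) w₀ (mem_union_right B (mem_filter.mp hw₀).1)
    (hadj w hw hwℓ) (hadj w₀ hw₀ hw₀ℓ)) hww₀

theorem SimpleGraph.IsTree.exists_splitsNbhds (hT : G.IsTree) (B W : Finset V)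
    (hW : ∀ w ∈ W, 2 ≤ #(closedNbhd G w ∩ B)) : ∃ X ⊆ B, SplitsNbhds G B W X := by
  induction B using Finset.strongInduction generalizing W with
  | H B ih =>
  rcases W.eq_empty_or_nonempty with rfl | hWne
  · exact ⟨∅, empty_subset B, fun w hw => absurd hw (notMem_empty w)⟩
  obtain ⟨ℓ, hℓ, hleaf⟩ := hT.exists_mem_adj_subsingleton (hWne.mono subset_union_right)
  have hℓB : ℓ ∈ B := by
    by_contra hℓB
    obtain ⟨u, hu, v, hv, huv⟩ := one_lt_card.mp (hW ℓ ((mem_union.mp hℓ).resolve_left hℓB))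
    have hadj (x : V) (hx : x ∈ closedNbhd G ℓ ∩ B) : G.Adj ℓ x := by
      obtain ⟨hxN, hxB⟩ := mem_inter.mp hx
      exact (mem_closedNbhd.mp hxN).resolve_left (ne_of_mem_of_not_mem hxB hℓB)
    exact huv (hleaf u (mem_union_left W (mem_inter.mp hu).2) v
      (mem_union_left W (mem_inter.mp hv).2) (hadj u hu) (hadj v hv))
  obtain ⟨X, hXB, hX⟩ := ih (B.erase ℓ) (erase_ssubset hℓB)
    (W.filter fun w => 2 ≤ #(closedNbhd G w ∩ B.erase ℓ)) fun w hw => (mem_filter.mp hw).2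
  -- the constraints that lose a vertex all become `{ℓ, z}`: colour `ℓ` opposite to `z`
  obtain ⟨z, hz⟩ := exists_common_partner hleaf hW
  exact hX.extend hℓB hXB fun w hw hw' => hz w hw (by simpa [hw] using hw')

theorem two_mul_gamma_le_card_add_card_aSet (hT : G.IsTree) {S : Finset V}
    (hS : IsDomSet G S) : 2 * gamma G ≤ #S + #(aSet G S) := by
  set A := aSet G S
  set B := S \ A
  set W := univ.filter fun w => Disjoint (closedNbhd G w) A
  obtain ⟨X, hXB, hX⟩ := hT.exists_splitsNbhds B W fun w hw =>
    two_le_card_closedNbhd_inter_sdiff_aSet hS (mem_filter.mp hw).2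
  have isDomSet_union (Y : Finset V) (hY : ∀ w ∈ W, (closedNbhd G w ∩ Y).Nonempty) :
      IsDomSet G (A ∪ Y) := by
    refine isDomSet_iff.mpr fun v => ?_
    by_cases hv : Disjoint (closedNbhd G v) A
    · exact (hY v (mem_filter.mpr ⟨mem_univ v, hv⟩)).mono
        (inter_subset_inter_left subset_union_right)
    · exact (not_disjoint_iff_nonempty_inter.mp hv).mono
        (inter_subset_inter_left subset_union_left)
  have hγX : gamma G ≤ #(A ∪ X) := Nat.sInf_le ⟨_, isDomSet_union X fun w hw => (hX w hw).1, rfl⟩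
  have hγX' : gamma G ≤ #(A ∪ (B \ X)) :=
    Nat.sInf_le ⟨_, isDomSet_union _ fun w hw => (hX w hw).2, rfl⟩
  have hXc := card_sdiff_add_card_eq_card hXB
  have hAc : #B + #A = #S := card_sdiff_add_card_eq_card (filter_subset _ S)
  have := card_union_le A X
  have := card_union_le A (B \ X)
  omega

theorem card_sub_mul_domCount_add_aTotal (G : SimpleGraph V) (i : ℕ) :
    (Fintype.card V - i) * domCount G i + aTotal G (i + 1) = (i + 1) * domCount G (i + 1) := by
  set D := fun j => univ.filter fun S : Finset V => IsDomSet G S ∧ #S = j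
  have hbij : #((D i).sigma fun T => Tᶜ) =
      #((D (i + 1)).sigma fun S => S.filter fun v => IsDomSet G (S.erase v)) := by
    refine card_nbij' (fun p => ⟨insert p.2 p.1, p.2⟩) (fun p => ⟨p.1.erase p.2, p.2⟩)
      ?_ ?_ ?_ ?_
    · rintro ⟨T, v⟩ hp
      simp only [D, coe_sigma, Set.mem_sigma_iff, coe_filter, mem_univ, true_and,
        Set.mem_ofPred_eq, mem_coe, mem_compl] at hp ⊢
      obtain ⟨⟨hT, hTi⟩, hv⟩ := hp
      refine ⟨⟨isDomSet_of_subset (subset_insert v T) hT, by rw [card_insert_of_notMem hv, hTi]⟩,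
        mem_insert_self v T, by rwa [erase_insert hv]⟩
    · rintro ⟨S, v⟩ hp
      simp only [D, coe_sigma, Set.mem_sigma_iff, coe_filter, mem_univ, true_and,
        Set.mem_ofPred_eq, mem_coe, mem_compl] at hp ⊢
      obtain ⟨⟨-, hSi⟩, hvS, hdom⟩ := hp
      exact ⟨⟨hdom, by rw [card_erase_of_mem hvS, hSi]; rfl⟩, notMem_erase v S⟩
    · rintro ⟨T, v⟩ hp
      simp only [coe_sigma, Set.mem_sigma_iff, mem_coe, mem_compl] at hp
      simp [erase_insert hp.2]
    · rintro ⟨S, v⟩ hp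
      simp only [coe_sigma, Set.mem_sigma_iff, mem_coe, mem_filter] at hp
      simp [insert_erase hp.2.1]
  rw [card_sigma, card_sigma] at hbij
  have hcompl : ∑ T ∈ D i, #Tᶜ = (Fintype.card V - i) * domCount G i := by
    rw [sum_congr rfl fun T hT => by rw [card_compl, (mem_filter.mp hT).2.2], sum_const,
      smul_eq_mul, mul_comm]
    rfl
  have hsplit : ∑ S ∈ D (i + 1), #(S.filter fun v => IsDomSet G (S.erase v)) + aTotal G (i + 1) =
      (i + 1) * domCount G (i + 1) := by
    rw [aTotal, ← sum_add_distrib, sum_congr rfl fun S hS => by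
      rw [aSet, card_filter_add_card_filter_not, (mem_filter.mp hS).2.2], sum_const,
      smul_eq_mul, mul_comm]
    rfl
  omega

theorem two_mul_gamma_mul_domCount_le (hT : G.IsTree) (i : ℕ) :
    2 * gamma G * domCount G i ≤ i * domCount G i + aTotal G i := by
  set D := univ.filter fun S : Finset V => IsDomSet G S ∧ #S = i
  calc 2 * gamma G * domCount G i = ∑ _S ∈ D, 2 * gamma G := by
        rw [sum_const, smul_eq_mul, mul_comm]
        rfl
    _ ≤ ∑ S ∈ D, (i + #(aSet G S)) := sum_le_sum fun S hS => by
        obtain ⟨hdom, rfl⟩ := (mem_filter.mp hS).2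
        exact two_mul_gamma_le_card_add_card_aSet hT hdom
    _ = i * domCount G i + aTotal G i := by
        rw [sum_add_distrib, sum_const, smul_eq_mul, mul_comm]
        rfl

theorem domCount_nondecreasing_segment (G : SimpleGraph V) (hT : G.IsTree) (i : ℕ)
    (h1 : gamma G < i) (h2 : i ≤ (Fintype.card V + 2 * gamma G + 1) / 3) :
    domCount G (i - 1) ≤ domCount G i := by
  obtain ⟨j, rfl⟩ : ∃ j, i = j + 1 := ⟨i - 1, by omega⟩
  rw [Nat.add_sub_cancel]
  have hcount := card_sub_mul_domCount_add_aTotal G j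
  have hcrit := two_mul_gamma_mul_domCount_le hT (j + 1)
  have hslack : 2 * (j + 1) ≤ (Fintype.card V - j) + 2 * gamma G := by omega
  refine Nat.le_of_mul_le_mul_left ?_ (show 0 < Fintype.card V - j by omega)
  nlinarith [Nat.mul_le_mul_right (domCount G (j + 1)) hslack]
end

section
/- Let T be a finite tree rooted at a vertex r and let M_0 be a dominating set of T such that (a) every supported vertex of M_0 other than r does not have its parent in M_0 (and if r is supported this condition is vacuous for r), and (b) no supported vertex of M_0 is a descendant of another supported vertex of M_0. Then there exists a minimal dominating set M of T with |M| ≥ |M_0|. -/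
open scoped Classical

variable {V : Type*} [Fintype V] [DecidableEq V]

/-!
Call `D` admissible if it is dominating and every vertex of `D` whose parent lies in `D` is
critical; hypothesis (a) says exactly that `M₀` is admissible. Among admissible sets of size at
least `|M₀|`, take one maximising the sum of the depths of its vertices. It is minimal: a
supported vertex `v` is dominated by some `c ∈ D \ {v}`, which is a child of `v` (the parent of
the supported vertex `v` is not in `D`) and hence critical. So `c` has external private
neighbours, all children of `c`, and replacing `c` by them gives an admissible set that is no
smaller and strictly deeper.
-/

open SimpleGraph Finset

section General

variable {W : Type*} {G : SimpleGraph W}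

theorem SimpleGraph.IsTree.eq_of_adj_of_dist_add_one_eq (hT : G.IsTree) (r : W) {a b b' : W}
    (hb : G.Adj b a) (hb' : G.Adj b' a) (h : G.dist r b + 1 = G.dist r a)
    (h' : G.dist r b' + 1 = G.dist r a) : b = b' := by
  obtain ⟨p, -, hp⟩ := (hT.connected r b).exists_path_of_dist
  obtain ⟨p', -, hp'⟩ := (hT.connected r b').exists_path_of_dist
  have hpath : (p.concat hb).IsPath := (p.concat hb).isPath_of_length_eq_dist (by simp [hp, h])
  have hpath' : (p'.concat hb').IsPath :=
    (p'.concat hb').isPath_of_length_eq_dist (by simp [hp', h'])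
  have := congrArg (fun q : G.Path r a => q.1.penultimate)
    ((hT.isAcyclic.subsingleton_path r a).elim ⟨_, hpath⟩ ⟨_, hpath'⟩)
  simpa using this

theorem SimpleGraph.IsTree.dist_eq_add_one_of_adj_of_ne (hT : G.IsTree) (r : W) {p a b : W}
    (hp : G.Adj p a) (hpa : G.dist r p + 1 = G.dist r a) (hb : G.Adj a b) (hbp : b ≠ p) :
    G.dist r b = G.dist r a + 1 := by
  rcases hT.dist_eq_dist_add_one_of_adj r hb with h | h
  · exact absurd (hT.eq_of_adj_of_dist_add_one_eq r hb.symm hp h.symm hpa) hbp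
  · exact h

theorem isParent_iff {r q x : W} :
    IsParent G r q x ↔ G.Adj q x ∧ G.dist r q + 1 = G.dist r x := by
  simp only [IsParent, IsChild, Descendant, dist_eq_one_iff_adj]
  rw [dist_comm (u := x) (v := r), dist_comm (u := q) (v := r)]
  constructor
  · rintro ⟨h, hqx⟩
    rw [dist_eq_one_iff_adj.2 hqx.symm] at h
    exact ⟨hqx, by omega⟩
  · rintro ⟨hqx, h⟩
    rw [dist_eq_one_iff_adj.2 hqx.symm]
    exact ⟨by omega, hqx⟩

theorem IsDomSet.mono {S T : Finset W} (hST : S ⊆ T) (hS : IsDomSet G S) : IsDomSet G T :=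
  fun v => (hS v).imp (fun hv => hST hv) fun ⟨u, hu, huv⟩ => ⟨u, hST hu, huv⟩

theorem minimalDomSet_of_forall_not_isDomSet_erase [DecidableEq W] {S : Finset W}
    (hS : IsDomSet G S) (hcrit : ∀ x ∈ S, ¬ IsDomSet G (S.erase x)) : MinimalDomSet G S := by
  refine ⟨hS, fun T hTS hT => ?_⟩
  obtain ⟨x, hxS, hxT⟩ := exists_of_ssubset hTS
  exact hcrit x hxS (hT.mono fun y hy => mem_erase.2 ⟨by rintro rfl; exact hxT hy, hTS.1 hy⟩)

/-- Every vertex of `D` whose parent (towards `r`) also lies in `D` is critical. -/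
def ChildrenCritical [DecidableEq W] (G : SimpleGraph W) (r : W) (D : Finset W) : Prop :=
  ∀ q ∈ D, ∀ x ∈ D, G.Adj q x → G.dist r q + 1 = G.dist r x → ¬ IsDomSet G (D.erase x)

theorem ChildrenCritical.exists_child_of_isDomSet_erase [DecidableEq W] (hT : G.IsTree)
    {r v : W} {D : Finset W} (hinv : ChildrenCritical G r D) (hv : v ∈ D)
    (hsupp : IsDomSet G (D.erase v)) :
    ∃ c ∈ D, G.Adj v c ∧ G.dist r v + 1 = G.dist r c := by
  obtain hvv | ⟨c, hc, hcv⟩ := hsupp v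
  · exact absurd hvv (notMem_erase v D)
  refine ⟨c, mem_of_mem_erase hc, hcv.symm, ?_⟩
  rcases hT.dist_eq_dist_add_one_of_adj r hcv with h | h
  · exact h.symm
  · exact absurd hsupp (hinv c (mem_of_mem_erase hc) v hv hcv h.symm)

theorem card_le_card_erase_union [DecidableEq W] {s t : Finset W} {a : W} (ha : a ∈ s)
    (ht : t.Nonempty) (hst : Disjoint s t) : s.card ≤ (s.erase a ∪ t).card := by
  rw [card_union_of_disjoint (disjoint_of_subset_left (erase_subset a s) hst),
    card_erase_of_mem ha]
  have := ht.card_pos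
  omega

theorem sum_lt_sum_erase_union [DecidableEq W] {s t : Finset W} {a : W} (f : W → ℕ)
    (ha : a ∈ s) (ht : t.Nonempty) (hst : Disjoint s t) (hf : ∀ b ∈ t, f a < f b) :
    ∑ x ∈ s, f x < ∑ x ∈ s.erase a ∪ t, f x := by
  rw [sum_union (disjoint_of_subset_left (erase_subset a s) hst), ← add_sum_erase s f ha]
  obtain ⟨b, hb⟩ := ht
  have := single_le_sum (f := f) (fun _ _ => Nat.zero_le _) hb
  have := hf b hb
  omega

end General

section PrivateNeighbors

variable {G : SimpleGraph V} {D : Finset V} {c : V}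

noncomputable def privateNeighbors (G : SimpleGraph V) (D : Finset V) (c : V) : Finset V :=
  univ.filter fun z => z ∉ D ∧ G.Adj c z ∧ ∀ w ∈ D, G.Adj w z → w = c

theorem mem_privateNeighbors {z : V} : z ∈ privateNeighbors G D c ↔
    z ∉ D ∧ G.Adj c z ∧ ∀ w ∈ D, G.Adj w z → w = c := by
  simp [privateNeighbors]

theorem disjoint_privateNeighbors : Disjoint D (privateNeighbors G D c) :=
  disjoint_right.2 fun _ hz => (mem_privateNeighbors.1 hz).1

theorem privateNeighbors_nonempty {v : V} (hD : IsDomSet G D) (hcrit : ¬ IsDomSet G (D.erase c))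
    (hv : v ∈ D) (hvc : G.Adj v c) : (privateNeighbors G D c).Nonempty := by
  simp only [IsDomSet, not_forall, not_or, not_exists, not_and] at hcrit
  obtain ⟨z, hzD, hzund⟩ := hcrit
  have hzc : z ≠ c := by
    rintro rfl
    exact hzund v (mem_erase.2 ⟨hvc.ne, hv⟩) hvc
  have hpriv : ∀ w ∈ D, G.Adj w z → w = c := fun w hw hwz => by
    by_contra hwc
    exact hzund w (mem_erase.2 ⟨hwc, hw⟩) hwz
  have hz : z ∉ D := fun h => hzD (mem_erase.2 ⟨hzc, h⟩)
  obtain hz' | ⟨w, hw, hwz⟩ := hD z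
  · exact absurd hz' hz
  · exact ⟨z, mem_privateNeighbors.2 ⟨hz, hpriv w hw hwz ▸ hwz, hpriv⟩⟩

theorem isDomSet_erase_union_privateNeighbors {v : V} (hD : IsDomSet G D) (hv : v ∈ D)
    (hvc : G.Adj v c) : IsDomSet G (D.erase c ∪ privateNeighbors G D c) := by
  intro t
  by_cases hother : ∃ w ∈ D, w ≠ c ∧ G.Adj w t
  · obtain ⟨w, hw, hwc, hwt⟩ := hother
    exact Or.inr ⟨w, mem_union_left _ (mem_erase.2 ⟨hwc, hw⟩), hwt⟩
  push Not at hother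
  by_cases htc : t = c
  · exact Or.inr ⟨v, mem_union_left _ (mem_erase.2 ⟨hvc.ne, hv⟩), htc ▸ hvc⟩
  by_cases ht : t ∈ D
  · exact Or.inl (mem_union_left _ (mem_erase.2 ⟨htc, ht⟩))
  obtain ht' | ⟨w, hw, hwt⟩ := hD t
  · exact absurd ht' ht
  have hwc : w = c := by_contra fun h => hother w hw h hwt
  refine Or.inl (mem_union_right _ (mem_privateNeighbors.2 ⟨ht, hwc ▸ hwt, ?_⟩))
  exact fun w' hw' hw't => by_contra fun h => hother w' hw' h hw't

theorem not_isDomSet_erase_of_mem_privateNeighbors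
    (hind : G.IsIndepSet (privateNeighbors G D c : Set V)) {z : V}
    (hz : z ∈ privateNeighbors G D c) :
    ¬ IsDomSet G ((D.erase c ∪ privateNeighbors G D c).erase z) := by
  intro hdom
  obtain hz' | ⟨u, hu, huz⟩ := hdom z
  · exact notMem_erase z _ hz'
  obtain ⟨huz', hu⟩ := mem_erase.1 hu
  rcases mem_union.1 hu with hu | hu
  · exact (mem_erase.1 hu).1 ((mem_privateNeighbors.1 hz).2.2 u (mem_of_mem_erase hu) huz)
  · exact hind hu hz huz' huz

theorem exists_adj_privateNeighbors_of_isDomSet_erase {x : V} (hD : IsDomSet G D) (hc : c ∈ D)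
    (hx : x ∈ D)
    (hxc : x ≠ c) (hxcrit : ¬ IsDomSet G (D.erase x))
    (hsupp : IsDomSet G ((D.erase c ∪ privateNeighbors G D c).erase x)) :
    ∃ z ∉ D, ∃ u ∈ privateNeighbors G D c, G.Adj x z ∧ G.Adj u z := by
  simp only [IsDomSet, not_forall, not_or, not_exists, not_and] at hxcrit
  obtain ⟨z, hzD, hzund⟩ := hxcrit
  obtain hz | ⟨u, hu, huz⟩ := hsupp z
  · obtain ⟨hzx, hz⟩ := mem_erase.1 hz
    rcases mem_union.1 hz with hz | hz
    · exact absurd (mem_erase.2 ⟨hzx, mem_of_mem_erase hz⟩) hzD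
    · obtain ⟨-, hcz, -⟩ := mem_privateNeighbors.1 hz
      exact absurd hcz (hzund c (mem_erase.2 ⟨hxc.symm, hc⟩))
  obtain ⟨hux, hu⟩ := mem_erase.1 hu
  rcases mem_union.1 hu with hu | hu
  · exact absurd huz (hzund u (mem_erase.2 ⟨hux, mem_of_mem_erase hu⟩))
  have hpriv := (mem_privateNeighbors.1 hu).2.2
  have hzx : z ≠ x := by
    rintro rfl
    exact hxc (hpriv z hx huz.symm)
  have hz : z ∉ D := fun h => hzD (mem_erase.2 ⟨hzx, h⟩)
  obtain hz' | ⟨w, hw, hwz⟩ := hD z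
  · exact absurd hz' hz
  have hwx : w = x := by_contra fun h => hzund w (mem_erase.2 ⟨h, hw⟩) hwz
  exact ⟨z, hz, u, hu, hwx ▸ hwz, huz⟩

end PrivateNeighbors

section Exchange

variable {G : SimpleGraph V} {r : V} {D : Finset V} {v c : V}

theorem dist_eq_of_mem_privateNeighbors (hT : G.IsTree) (hv : v ∈ D) (hvc : G.Adj v c)
    (hdepth : G.dist r v + 1 = G.dist r c) {z : V} (hz : z ∈ privateNeighbors G D c) :
    G.dist r z = G.dist r c + 1 := by
  obtain ⟨hzD, hcz, -⟩ := mem_privateNeighbors.1 hz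
  exact hT.dist_eq_add_one_of_adj_of_ne r hvc hdepth hcz (by rintro rfl; exact hzD hv)

theorem isIndepSet_privateNeighbors (hT : G.IsTree) (hv : v ∈ D) (hvc : G.Adj v c)
    (hdepth : G.dist r v + 1 = G.dist r c) : G.IsIndepSet (privateNeighbors G D c : Set V) :=
  fun z hz z' hz' _ hzz' => hT.dist_ne_of_adj r hzz' <| by
    rw [dist_eq_of_mem_privateNeighbors hT hv hvc hdepth hz,
      dist_eq_of_mem_privateNeighbors hT hv hvc hdepth hz']

theorem ChildrenCritical.erase_union_privateNeighbors (hT : G.IsTree) (hD : IsDomSet G D)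
    (hinv : ChildrenCritical G r D) (hc : c ∈ D) (hv : v ∈ D) (hvc : G.Adj v c)
    (hdepth : G.dist r v + 1 = G.dist r c) :
    ChildrenCritical G r (D.erase c ∪ privateNeighbors G D c) := by
  intro q hq x hx hqx hqdx hsupp
  rcases mem_union.1 hx with hx | hx
  swap
  · exact not_isDomSet_erase_of_mem_privateNeighbors
      (isIndepSet_privateNeighbors hT hv hvc hdepth) hx hsupp
  obtain ⟨hxc, hx⟩ := mem_erase.1 hx
  rcases mem_union.1 hq with hq | hq
  swap
  · exact hxc ((mem_privateNeighbors.1 hq).2.2 x hx hqx.symm)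
  obtain ⟨z, hz, u, hu, hxz, huz⟩ := exists_adj_privateNeighbors_of_isDomSet_erase hD hc hx hxc
    (hinv q (mem_of_mem_erase hq) x hx hqx hqdx) hsupp
  obtain ⟨huD, hcu, -⟩ := mem_privateNeighbors.1 hu
  -- `c, u, z, x` is a descending path, so `z` is the parent of `x`, while `q ≠ z` as `q ∈ D`.
  have hdz : G.dist r z = G.dist r u + 1 :=
    hT.dist_eq_add_one_of_adj_of_ne r hcu
      (dist_eq_of_mem_privateNeighbors hT hv hvc hdepth hu).symm huz (by rintro rfl; exact hz hc)
  have hdx : G.dist r x = G.dist r z + 1 :=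
    hT.dist_eq_add_one_of_adj_of_ne r huz hdz.symm hxz.symm (by rintro rfl; exact huD hx)
  have hzq : z = q := hT.eq_of_adj_of_dist_add_one_eq r hxz.symm hqx hdx.symm hqdx
  exact hz (hzq ▸ mem_of_mem_erase hq)

theorem ChildrenCritical.exists_sum_dist_lt (hT : G.IsTree) (hD : IsDomSet G D)
    (hinv : ChildrenCritical G r D) (hc : c ∈ D) (hv : v ∈ D) (hvc : G.Adj v c)
    (hdepth : G.dist r v + 1 = G.dist r c) :
    ∃ D', IsDomSet G D' ∧ ChildrenCritical G r D' ∧ D.card ≤ D'.card ∧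
      ∑ w ∈ D, G.dist r w < ∑ w ∈ D', G.dist r w := by
  have hP := privateNeighbors_nonempty hD (hinv v hv c hc hvc hdepth) hv hvc
  refine ⟨_, isDomSet_erase_union_privateNeighbors hD hv hvc,
    hinv.erase_union_privateNeighbors hT hD hc hv hvc hdepth,
    card_le_card_erase_union hc hP disjoint_privateNeighbors,
    sum_lt_sum_erase_union _ hc hP disjoint_privateNeighbors fun z hz => ?_⟩
  rw [dist_eq_of_mem_privateNeighbors hT hv hvc hdepth hz]
  omega

theorem ChildrenCritical.exists_minimalDomSet_card_le (hT : G.IsTree) (hD : IsDomSet G D)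
    (hinv : ChildrenCritical G r D) : ∃ M, MinimalDomSet G M ∧ D.card ≤ M.card := by
  obtain ⟨M, hM, hmax⟩ := (univ.filter fun M =>
      IsDomSet G M ∧ ChildrenCritical G r M ∧ D.card ≤ M.card).exists_max_image
    (fun M => ∑ w ∈ M, G.dist r w) ⟨D, by simp [hD, hinv]⟩
  simp only [mem_filter, mem_univ, true_and] at hM hmax
  obtain ⟨hMdom, hMinv, hDM⟩ := hM
  refine ⟨M, minimalDomSet_of_forall_not_isDomSet_erase hMdom fun v hv hsupp => ?_, hDM⟩
  obtain ⟨c, hc, hvc, hdepth⟩ := hMinv.exists_child_of_isDomSet_erase hT hv hsupp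
  obtain ⟨M', hM'dom, hM'inv, hMM', hlt⟩ := hMinv.exists_sum_dist_lt hT hMdom hc hv hvc hdepth
  exact absurd (hmax M' ⟨hM'dom, hM'inv, hDM.trans hMM'⟩) (not_le.2 hlt)

end Exchange

theorem exists_minimal_dominating_set_ge_general (G : SimpleGraph V) (hT : G.IsTree) (r : V)
    (M0 : Finset V) (hM0 : IsDomSet G M0)
    (ha : ∀ v ∈ M0 \ aSet G M0, v ≠ r → ∀ p : V, IsParent G r p v → p ∉ M0) :
    ∃ M : Finset V, MinimalDomSet G M ∧ M0.card ≤ M.card := by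
  refine ChildrenCritical.exists_minimalDomSet_card_le (r := r) hT hM0
    fun q hq x hx hqx hdepth hsupp => ?_
  have hxr : x ≠ r := by
    rintro rfl
    simp at hdepth
  exact ha x (by simp [aSet, hx, hsupp]) hxr q (isParent_iff.2 ⟨hqx, hdepth⟩) hq

theorem exists_minimal_dominating_set_ge (G : SimpleGraph V) (hT : G.IsTree) (r : V)
    (M0 : Finset V) (hM0 : IsDomSet G M0)
    (ha : ∀ v ∈ M0 \ aSet G M0, v ≠ r → ∀ p : V, IsParent G r p v → p ∉ M0)
    (hb : ∀ x ∈ M0 \ aSet G M0, ∀ y ∈ M0 \ aSet G M0, x ≠ y → ¬ Descendant G r x y) :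
    ∃ M : Finset V, MinimalDomSet G M ∧ M0.card ≤ M.card :=
  exists_minimal_dominating_set_ge_general G hT r M0 hM0 ha
end
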